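/- arXiv:1209.3115 — 5 statements merged into one kernel-verified Lean document; each statement's English description precedes it below -/
import Mathlib

section
/- Let p = p(n) satisfy p(n) → 0 and d = np(n) → ∞ as n → ∞. Then for every ε > 0, P( |D(G(n,p)) · d / (n ln d) − 1| ≤ ε ) → 1 as n → ∞; that is, asymptotically almost surely D(G(n,p)) = (n ln d / d)(1+o(1)). -/
/-!
Write `d = np`, `L = log d` and `t = L / p`.

Upper bound (alteration): a fixed set `S` of `r ≈ (1 + ε/3) t` vertices leaves in
expectation `n (1 - p)^r ≤ d^(-ε/3) / p` vertices undominated; adding them to `S` gives a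
dominating set, and by Markov's inequality there are fewer than `ε t / 3` of them with
probability `1 - O(d^(-ε/3))`.

Lower bound (first moment): for distinct `v ∉ S` the events "`v` has no neighbour in `S`" depend
on disjoint sets of edges, so `S` dominates with probability `(1 - (1 - p)^r)^(n - r)`. For
`r = ⌊(1 - ε) t⌋` a union bound over the `C(n, r) ≤ (e n / r)^r ≤ d^(2r)` sets of size `r` gives
at most `exp (2 L r - d^(ε/2) / (2p)) ≤ 1 / d`, as `p ≤ ε/2` makes `(1 - p)^r ≥ d^(-(1 - ε/2))`.
-/

open MeasureTheory Filter
open scoped Classical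

/-- The Bernoulli measure on `Bool` with success probability `p` (clamped to `[0,1]`). -/
noncomputable def bernoulliMeasure (p : ℝ) : Measure Bool :=
  (PMF.bernoulli (min (Real.toNNReal p) 1) (min_le_right _ _)).toMeasure

instance (p : ℝ) : IsProbabilityMeasure (bernoulliMeasure p) :=
  PMF.toMeasure.isProbabilityMeasure _

/-- The Erdős–Rényi measure `G(n,p)`: every potential edge (pair of vertices of `Fin n`)
is present independently with probability `p`.  A sample point is an indicator function
on `Sym2 (Fin n)` (diagonal coordinates are simply ignored). -/
noncomputable def gnp (n : ℕ) (p : ℝ) : Measure (Sym2 (Fin n) → Bool) :=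
  Measure.pi fun _ => bernoulliMeasure p

/-- The simple graph determined by an edge-indicator function. -/
def graphOf {n : ℕ} (f : Sym2 (Fin n) → Bool) : SimpleGraph (Fin n) where
  Adj v w := v ≠ w ∧ f s(v, w) = true
  symm := ⟨by
    intro v w h
    exact ⟨Ne.symm h.1, by rw [Sym2.eq_swap]; exact h.2⟩⟩
  loopless := ⟨fun v h => h.1 rfl⟩

/-- A set `S` of vertices is dominating if every vertex is in `S` or adjacent to a member
of `S`. -/
def IsDominating {n : ℕ} (G : SimpleGraph (Fin n)) (S : Set (Fin n)) : Prop :=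
  ∀ v, v ∈ S ∨ ∃ u ∈ S, G.Adj u v

/-- The domination number: the smallest cardinality of a dominating set. -/
noncomputable def domNumber {n : ℕ} (G : SimpleGraph (Fin n)) : ℕ :=
  sInf {r | ∃ S : Finset (Fin n), S.card = r ∧ IsDominating G ↑S}

/-- The number of dominating sets of size `r`. -/
noncomputable def numDomSets {n : ℕ} (G : SimpleGraph (Fin n)) (r : ℕ) : ℕ :=
  ((Finset.powersetCard r (Finset.univ : Finset (Fin n))).filter
    (fun S => IsDominating G ↑S)).card

/-- The expected number of dominating sets of size `r` in `G(n,p)`: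
`E(X_r) = C(n,r) (1-(1-p)^r)^(n-r)`. -/
noncomputable def EX (n r : ℕ) (p : ℝ) : ℝ :=
  (n.choose r : ℝ) * (1 - (1 - p) ^ r) ^ (n - r)

/-- The critical size `r̂ = min{ r | E(X_r) ≥ 1/d } - 1`, where `d = np`. -/
noncomputable def rhat (n : ℕ) (p : ℝ) : ℕ :=
  sInf {r : ℕ | EX n r p ≥ 1 / (n * p)} - 1


open Real

section DependsOn

variable {ι : Type*} {Ω : ι → Type*}

lemma DependsOn.preimage_image_restrict {s : Finset ι} {A : Set (∀ i, Ω i)}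
    (hA : DependsOn (· ∈ A) s) : s.restrict ⁻¹' (s.restrict '' A) = A := by
  refine Set.Subset.antisymm ?_ (Set.subset_preimage_image _ _)
  rintro x ⟨y, hy, hyx⟩
  exact (hA fun i hi => congrFun hyx ⟨i, hi⟩).mp hy

variable [Fintype ι] [∀ i, MeasurableSpace (Ω i)] [∀ i, MeasurableSingletonClass (Ω i)]
  [∀ i, Countable (Ω i)] (μ : ∀ i, Measure (Ω i)) [∀ i, IsProbabilityMeasure (μ i)]

lemma measure_pi_inter_of_dependsOn {s t : Finset ι} (hst : Disjoint s t)
    {A B : Set (∀ i, Ω i)} (hA : DependsOn (· ∈ A) s) (hB : DependsOn (· ∈ B) t) :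
    Measure.pi μ (A ∩ B) = Measure.pi μ A * Measure.pi μ B := by
  have hind : ProbabilityTheory.IndepFun s.restrict t.restrict (Measure.pi μ) :=
    (ProbabilityTheory.iIndepFun_pi (X := fun _ => id) fun _ => aemeasurable_id).indepFun_finset
      s t hst measurable_pi_apply
  rw [← hA.preimage_image_restrict, ← hB.preimage_image_restrict]
  exact hind.measure_inter_preimage_eq_mul _ _ .of_discrete .of_discrete

lemma measure_pi_biInter_of_dependsOn {α : Type*} (T : Finset α) (B : α → Finset ι)
    (hB : (T : Set α).PairwiseDisjoint B) (A : α → Set (∀ i, Ω i))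
    (hA : ∀ a ∈ T, DependsOn (· ∈ A a) (B a)) :
    Measure.pi μ (⋂ a ∈ T, A a) = ∏ a ∈ T, Measure.pi μ (A a) := by
  classical
  induction T using Finset.induction_on with
  | empty => simp
  | insert b T hb ih =>
    rw [Finset.prod_insert hb, Finset.set_biInter_insert,
      measure_pi_inter_of_dependsOn μ (s := B b) (t := T.biUnion B), ih]
    · exact hB.subset (by simp)
    · exact fun a ha => hA a (by simp [ha])
    · exact (Finset.disjoint_biUnion_right _ _ _).2 fun a ha =>
        hB (by simp) (by simp [ha]) (by rintro rfl; exact hb ha)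
    · exact hA b (by simp)
    · intro x y hxy
      simp only [Set.mem_iInter]
      exact propext <| forall₂_congr fun a ha => Iff.of_eq <|
        hA a (by simp [ha]) fun i hi => hxy i (Finset.mem_biUnion.2 ⟨a, ha, hi⟩)

end DependsOn

section Domination

variable {n : ℕ} {G : SimpleGraph (Fin n)}

lemma IsDominating.mono {S T : Finset (Fin n)} (hST : S ⊆ T) (h : IsDominating G S) :
    IsDominating G T := fun v =>
  (h v).imp (fun hv => hST hv) fun ⟨u, hu, huv⟩ => ⟨u, hST hu, huv⟩

lemma domNumber_le_card {S : Finset (Fin n)} (h : IsDominating G S) : domNumber G ≤ S.card :=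
  Nat.sInf_le ⟨S, rfl, h⟩

lemma exists_isDominating_card_eq {r : ℕ} (hD : domNumber G ≤ r) (hr : r ≤ n) :
    ∃ S : Finset (Fin n), S.card = r ∧ IsDominating G S := by
  obtain ⟨S, hS, hdom⟩ :
      domNumber G ∈ {r | ∃ S : Finset (Fin n), S.card = r ∧ IsDominating G S} :=
    Nat.sInf_mem ⟨n, Finset.univ, by simp, fun v => Or.inl (by simp)⟩
  obtain ⟨T, hST, hT⟩ := Finset.exists_superset_card_eq (hS ▸ hD) (by simpa using hr)
  exact ⟨T, hT, hdom.mono hST⟩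

noncomputable def undominated (G : SimpleGraph (Fin n)) (S : Finset (Fin n)) : Finset (Fin n) :=
  Finset.univ.filter fun v => v ∉ S ∧ ∀ u ∈ S, ¬ G.Adj u v

lemma isDominating_union_undominated (S : Finset (Fin n)) :
    IsDominating G ↑(S ∪ undominated G S) := by
  intro v
  by_cases hv : v ∈ S
  · exact Or.inl (by simp [hv])
  by_cases hS : ∀ u ∈ S, ¬ G.Adj u v
  · exact Or.inl (by simpa [undominated, hv] using hS)
  push Not at hS
  obtain ⟨u, hu, huv⟩ := hS
  exact Or.inr ⟨u, by simp [hu], huv⟩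

lemma domNumber_le_card_add_card_undominated (S : Finset (Fin n)) :
    domNumber G ≤ S.card + (undominated G S).card :=
  (domNumber_le_card (isDominating_union_undominated S)).trans (Finset.card_union_le _ _)

end Domination

section Gnp

open scoped ENNReal

variable {n : ℕ} {p : ℝ}

instance (n : ℕ) (p : ℝ) : IsProbabilityMeasure (gnp n p) := by
  unfold gnp; infer_instance

lemma bernoulliMeasure_singleton_false (h0 : 0 ≤ p) (h1 : p ≤ 1) :
    bernoulliMeasure p {false} = ENNReal.ofReal (1 - p) := by
  have hp : min (Real.toNNReal p) 1 = Real.toNNReal p := min_eq_left (by simpa using h1)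
  rw [bernoulliMeasure, PMF.toMeasure_apply_singleton _ _ (measurableSet_singleton _),
    PMF.bernoulli_apply, hp, cond_false, ENNReal.coe_sub, ENNReal.coe_one,
    ENNReal.ofReal_sub _ h0, ENNReal.ofReal_one, ENNReal.ofReal]

def noEdgeTo (S : Finset (Fin n)) (v : Fin n) : Set (Sym2 (Fin n) → Bool) :=
  {f | ∀ u ∈ S, f s(u, v) = false}

lemma noEdgeTo_eq_pi (S : Finset (Fin n)) (v : Fin n) :
    noEdgeTo S v = (↑(S.image (s(·, v))) : Set (Sym2 (Fin n))).pi fun _ => {false} := by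
  ext f
  simp [noEdgeTo]

lemma gnp_noEdgeTo (h0 : 0 ≤ p) (h1 : p ≤ 1) {S : Finset (Fin n)} {v : Fin n} (hv : v ∉ S) :
    gnp n p (noEdgeTo S v) = ENNReal.ofReal (1 - p) ^ S.card := by
  rw [noEdgeTo_eq_pi, gnp, Measure.pi_pi_finset, Finset.prod_const,
    bernoulliMeasure_singleton_false h0 h1, Finset.card_image_of_injOn]
  intro u hu w hw huw
  rcases Sym2.eq_iff.1 huw with ⟨h, -⟩ | ⟨h, -⟩
  · exact h
  · exact absurd (h ▸ hu) hv

lemma dependsOn_noEdgeTo (S : Finset (Fin n)) (v : Fin n) :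
    DependsOn (· ∈ noEdgeTo S v) (S.image (s(·, v))) := fun f g hfg =>
  propext <| forall₂_congr fun u hu => by rw [hfg _ (Finset.mem_image_of_mem _ hu)]

lemma notMem_noEdgeTo_iff {S : Finset (Fin n)} {v : Fin n} (hv : v ∉ S)
    (f : Sym2 (Fin n) → Bool) : f ∉ noEdgeTo S v ↔ ∃ u ∈ S, (graphOf f).Adj u v := by
  simp only [noEdgeTo, Set.mem_ofPred_eq, not_forall, Bool.not_eq_false, exists_prop]
  exact ⟨fun ⟨u, hu, h⟩ => ⟨u, hu, ne_of_mem_of_not_mem hu hv, h⟩,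
    fun ⟨u, hu, _, h⟩ => ⟨u, hu, h⟩⟩

lemma setOf_isDominating_eq_biInter (S : Finset (Fin n)) :
    {f | IsDominating (graphOf f) S} = ⋂ v ∈ Finset.univ \ S, (noEdgeTo S v)ᶜ := by
  ext f
  simp only [IsDominating, Set.mem_ofPred_eq, Set.mem_iInter, Finset.mem_sdiff,
    Finset.mem_univ, true_and, Set.mem_compl_iff, Finset.mem_coe]
  refine forall_congr' fun v => ?_
  by_cases hv : v ∈ S
  · simp [hv]
  · simp [hv, notMem_noEdgeTo_iff hv]

lemma gnp_isDominating (h0 : 0 ≤ p) (h1 : p ≤ 1) (S : Finset (Fin n)) :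
    gnp n p {f | IsDominating (graphOf f) S} =
      ENNReal.ofReal ((1 - (1 - p) ^ S.card) ^ (n - S.card)) := by
  have hdisj : ((Finset.univ \ S : Finset (Fin n)) : Set (Fin n)).PairwiseDisjoint
      fun v => S.image (s(·, v)) := by
    intro v hv w hw hvw
    simp only [Finset.coe_sdiff, Finset.coe_univ, Set.mem_sdiff, Set.mem_univ, true_and,
      Finset.mem_coe] at hv hw
    refine Finset.disjoint_left.2 fun e he he' => ?_
    obtain ⟨u, hu, rfl⟩ := Finset.mem_image.1 he
    obtain ⟨u', hu', huv⟩ := Finset.mem_image.1 he'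
    rcases Sym2.eq_iff.1 huv with ⟨-, h⟩ | ⟨h, -⟩
    · exact hvw h.symm
    · exact hv (h ▸ hu')
  have hcompl : ∀ v ∈ Finset.univ \ S,
      gnp n p (noEdgeTo S v)ᶜ = ENNReal.ofReal (1 - (1 - p) ^ S.card) := by
    intro v hv
    rw [prob_compl_eq_one_sub .of_discrete, gnp_noEdgeTo h0 h1 (Finset.mem_sdiff.1 hv).2,
      ← ENNReal.ofReal_pow (by linarith), ← ENNReal.ofReal_one,
      ← ENNReal.ofReal_sub _ (by positivity)]
  rw [setOf_isDominating_eq_biInter, gnp, measure_pi_biInter_of_dependsOn _ _ _ hdisj]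
  · rw [← gnp, Finset.prod_congr rfl hcompl, Finset.prod_const, ← ENNReal.ofReal_pow
      (sub_nonneg.2 (pow_le_one₀ (by linarith) (by linarith))), Finset.card_univ_sdiff,
      Fintype.card_fin]
  · exact fun v _ _ _ h => congrArg Not (dependsOn_noEdgeTo S v h)

lemma gnp_domNumber_le_le (h0 : 0 ≤ p) (h1 : p ≤ 1) {r : ℕ} (hr : r ≤ n) :
    gnp n p {f | domNumber (graphOf f) ≤ r} ≤ ENNReal.ofReal (EX n r p) := by
  have hsub : {f : Sym2 (Fin n) → Bool | domNumber (graphOf f) ≤ r} ⊆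
      ⋃ S ∈ Finset.powersetCard r (Finset.univ : Finset (Fin n)),
        {f | IsDominating (graphOf f) S} := fun f hf => by
    obtain ⟨S, hS, hdom⟩ := exists_isDominating_card_eq hf hr
    exact Set.mem_iUnion₂.2 ⟨S, Finset.mem_powersetCard_univ.2 hS, hdom⟩
  calc gnp n p {f | domNumber (graphOf f) ≤ r}
      ≤ ∑ S ∈ Finset.powersetCard r (Finset.univ : Finset (Fin n)),
          gnp n p {f | IsDominating (graphOf f) S} :=
        (measure_mono hsub).trans (measure_biUnion_finset_le _ _)
    _ = ENNReal.ofReal (EX n r p) := by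
        rw [Finset.sum_congr rfl fun S hS => by
            rw [gnp_isDominating h0 h1, Finset.mem_powersetCard_univ.1 hS],
          Finset.sum_const, Finset.card_powersetCard, Finset.card_univ, Fintype.card_fin,
          nsmul_eq_mul, EX, ENNReal.ofReal_mul (by positivity), ENNReal.ofReal_natCast]

lemma card_undominated_eq_sum_indicator (S : Finset (Fin n)) (f : Sym2 (Fin n) → Bool) :
    ((undominated (graphOf f) S).card : ℝ≥0∞) =
      ∑ v ∈ Finset.univ \ S, (noEdgeTo S v).indicator 1 f := by
  have : undominated (graphOf f) S = (Finset.univ \ S).filter (f ∈ noEdgeTo S ·) := by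
    ext v
    by_cases hv : v ∈ S
    · simp [undominated, hv]
    · simpa [undominated, hv] using (notMem_noEdgeTo_iff hv f).not_right.symm
  rw [this, Finset.card_filter, Nat.cast_sum]
  exact Finset.sum_congr rfl fun v _ => by simp [Set.indicator_apply]

lemma lintegral_card_undominated_le (h0 : 0 ≤ p) (h1 : p ≤ 1) (S : Finset (Fin n)) :
    ∫⁻ f, ((undominated (graphOf f) S).card : ℝ≥0∞) ∂gnp n p ≤
      n * ENNReal.ofReal (1 - p) ^ S.card := by
  simp_rw [card_undominated_eq_sum_indicator]
  rw [lintegral_finsetSum _ fun _ _ => Measurable.of_discrete]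
  calc ∑ v ∈ Finset.univ \ S, ∫⁻ f, (noEdgeTo S v).indicator 1 f ∂gnp n p
      = ∑ _v ∈ Finset.univ \ S, ENNReal.ofReal (1 - p) ^ S.card :=
        Finset.sum_congr rfl fun v hv => by
          rw [lintegral_indicator_one .of_discrete, gnp_noEdgeTo h0 h1 (Finset.mem_sdiff.1 hv).2]
    _ ≤ n * ENNReal.ofReal (1 - p) ^ S.card := by
        rw [Finset.sum_const, nsmul_eq_mul]
        gcongr
        exact_mod_cast (Finset.card_le_univ _).trans (Fintype.card_fin n).le

lemma gnp_domNumber_ge_le (h0 : 0 ≤ p) (h1 : p ≤ 1) {r : ℕ} (hr : r ≤ n) {a : ℝ}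
    (ha : 0 < a) :
    gnp n p {f | r + a ≤ (domNumber (graphOf f) : ℝ)} ≤
      ENNReal.ofReal (n * (1 - p) ^ r / a) := by
  obtain ⟨S, -, hS⟩ := Finset.exists_subset_card_eq
    (show r ≤ (Finset.univ : Finset (Fin n)).card by simpa using hr)
  have hsub : {f | r + a ≤ (domNumber (graphOf f) : ℝ)} ⊆
      {f | ENNReal.ofReal a ≤ (undominated (graphOf f) S).card} := fun f hf => by
    have hD : (domNumber (graphOf f) : ℝ) ≤ r + (undominated (graphOf f) S).card := by
      exact_mod_cast hS ▸ domNumber_le_card_add_card_undominated S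
    simpa using ENNReal.ofReal_le_ofReal (show a ≤ (undominated (graphOf f) S).card by
      simp only [Set.mem_ofPred_eq] at hf; linarith)
  calc gnp n p {f | r + a ≤ (domNumber (graphOf f) : ℝ)}
      ≤ (∫⁻ f, ((undominated (graphOf f) S).card : ℝ≥0∞) ∂gnp n p) /
          ENNReal.ofReal a :=
        (measure_mono hsub).trans (meas_ge_le_lintegral_div Measurable.of_discrete.aemeasurable
          (by simpa using ha) ENNReal.ofReal_ne_top)
    _ ≤ n * ENNReal.ofReal (1 - p) ^ r / ENNReal.ofReal a := by
        gcongr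
        exact hS ▸ lintegral_card_undominated_le h0 h1 S
    _ = ENNReal.ofReal (n * (1 - p) ^ r / a) := by
        rw [ENNReal.ofReal_div_of_pos ha, ENNReal.ofReal_mul (by positivity),
          ENNReal.ofReal_pow (by linarith), ENNReal.ofReal_natCast]

end Gnp

section Estimates

lemma choose_le_exp_one_mul_div_pow (n r : ℕ) : (n.choose r : ℝ) ≤ (exp 1 * n / r) ^ r := by
  rcases r.eq_zero_or_pos with rfl | hr
  · simp
  have hr' : (0 : ℝ) < r := by exact_mod_cast hr
  calc (n.choose r : ℝ) ≤ n ^ r / r.factorial := Nat.choose_le_pow_div r n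
    _ = (n / r) ^ r * (r ^ r / r.factorial) := by
        rw [div_pow, div_mul_div_cancel₀ (by positivity)]
    _ ≤ (n / r) ^ r * exp r := by gcongr; exact pow_div_factorial_le_exp _ hr'.le r
    _ = (exp 1 * n / r) ^ r := by rw [← exp_one_pow]; ring

lemma EX_le {p : ℝ} (hp0 : 0 ≤ p) (hp1 : p ≤ 1) (n r : ℕ) :
    EX n r p ≤ (exp 1 * n / r) ^ r * exp (-((n - r : ℕ) * (1 - p) ^ r)) := by
  have hq : 0 ≤ 1 - (1 - p) ^ r := sub_nonneg.2 (pow_le_one₀ (by linarith) (by linarith))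
  refine mul_le_mul (choose_le_exp_one_mul_div_pow n r) ?_ (pow_nonneg hq _) (by positivity)
  calc (1 - (1 - p) ^ r) ^ (n - r) ≤ exp (-(1 - p) ^ r) ^ (n - r) :=
        pow_le_pow_left₀ hq (one_sub_le_exp_neg _) _
    _ = exp (-((n - r : ℕ) * (1 - p) ^ r)) := by rw [← exp_nat_mul]; ring_nf

lemma exp_neg_mul_le_one_sub_pow {p : ℝ} (hp1 : p < 1) (r : ℕ) :
    exp (-(p / (1 - p) * r)) ≤ (1 - p) ^ r := by
  have h1p : 0 < 1 - p := by linarith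
  rw [← exp_log (pow_pos h1p r), log_pow, exp_le_exp]
  have hlog := one_sub_inv_le_log_of_pos h1p
  have : 1 - (1 - p)⁻¹ = -(p / (1 - p)) := by field_simp; ring
  nlinarith [r.cast_nonneg (α := ℝ)]

lemma two_mul_floor_le {n : ℕ} {p ε : ℝ} (hp : 0 < p)
    (hLd : 2 * (1 - ε) * log (n * p) ≤ n * p) :
    2 * (⌊(1 - ε) * (log (n * p) / p)⌋₊ : ℝ) ≤ n := by
  rcases le_or_gt ((1 - ε) * (log (n * p) / p)) 0 with h | h
  · simp [Nat.floor_eq_zero.2 (h.trans_lt one_pos)]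
  calc 2 * (⌊(1 - ε) * (log (n * p) / p)⌋₊ : ℝ)
      ≤ 2 * ((1 - ε) * (log (n * p) / p)) := by
        gcongr; exact Nat.floor_le h.le
    _ ≤ n := by rw [← mul_div_assoc, mul_div_assoc', div_le_iff₀ hp]; linarith

lemma exp_one_mul_div_le_exp_sq {n r : ℕ} {p c L : ℝ} (hp : 0 < p) (hcL : 2 ≤ c * L)
    (hL : 1 ≤ L) (hd : n * p = exp L) (hr : c * (L / p) / 2 ≤ r) :
    exp 1 * n / r ≤ exp L ^ 2 := by
  have hc : 0 < c := by nlinarith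
  calc exp 1 * n / r ≤ exp 1 * n / (c * (L / p) / 2) := by gcongr
    _ = exp 1 * (n * p) * (2 / (c * L)) := by field_simp
    _ ≤ exp 1 * (n * p) * 1 := by gcongr; rw [div_le_one (by positivity)]; exact hcL
    _ ≤ exp L ^ 2 := by rw [mul_one, hd, sq]; gcongr

lemma exp_mul_div_le_sub_mul_one_sub_pow {n r : ℕ} {p ε L : ℝ} (hp : 0 < p)
    (hpε : p ≤ ε / 2) (hε1 : ε < 1) (hL : 0 ≤ L) (hd : n * p = exp L)
    (hpr : p * r ≤ (1 - ε) * L) (hrn : 2 * (r : ℝ) ≤ n) :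
    exp (ε / 2 * L) / (2 * p) ≤ (n - r : ℕ) * (1 - p) ^ r := by
  have hq : exp (-((1 - ε / 2) * L)) ≤ (1 - p) ^ r := by
    refine (exp_le_exp.2 ?_).trans (exp_neg_mul_le_one_sub_pow (by linarith) r)
    rw [neg_le_neg_iff, div_mul_eq_mul_div, div_le_iff₀ (by linarith)]
    nlinarith [mul_nonneg hL (by linarith : 0 ≤ ε / 2 - p),
      mul_nonneg (mul_nonneg hL hp.le) (by linarith : 0 ≤ ε)]
  have hnr : (n : ℝ) / 2 ≤ (n - r : ℕ) := by
    rw [Nat.cast_sub (by exact_mod_cast (by linarith : (r : ℝ) ≤ n))]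
    linarith
  have hsplit : exp (ε / 2 * L) = exp L * exp (-((1 - ε / 2) * L)) := by
    rw [← exp_add]; ring_nf
  calc exp (ε / 2 * L) / (2 * p) = n / 2 * exp (-((1 - ε / 2) * L)) := by
        rw [hsplit, ← hd]; field_simp
    _ ≤ (n - r : ℕ) * (1 - p) ^ r := by gcongr

lemma EX_floor_le_inv {n : ℕ} {p ε : ℝ} (hp : 0 < p) (hpε : p ≤ ε / 2) (hε1 : ε < 1)
    (hL : 2 / (1 - ε) ≤ log (n * p)) (hLd : 2 * (1 - ε) * log (n * p) ≤ n * p)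
    (hexp : 2 * log (n * p) ^ 2 + log (n * p) ≤ exp (ε / 2 * log (n * p)) / 2) :
    EX n ⌊(1 - ε) * (log (n * p) / p)⌋₊ p ≤ (n * p)⁻¹ := by
  have hrn := two_mul_floor_le hp hLd
  set L := log (n * p)
  set r := ⌊(1 - ε) * (L / p)⌋₊
  have h1ε : 0 < 1 - ε := by linarith
  have hL2 : 2 ≤ (1 - ε) * L := by rwa [div_le_iff₀' h1ε] at hL
  have hL1 : 1 ≤ L := by nlinarith
  have hd : n * p = exp L :=
    (exp_log (by have := (log_pos_iff (by positivity)).1 (by linarith : 0 < L); linarith)).symm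
  have hLt : L ≤ L / p := le_div_self (by linarith) hp (by linarith)
  have hrt : (r : ℝ) ≤ (1 - ε) * (L / p) := Nat.floor_le (by positivity)
  have hpr : p * r ≤ (1 - ε) * L := by
    calc p * r ≤ p * ((1 - ε) * (L / p)) := by gcongr
      _ = (1 - ε) * L := by field_simp
  have hr_half : (1 - ε) * (L / p) / 2 ≤ r := by
    have := Nat.sub_one_lt_floor ((1 - ε) * (L / p))
    nlinarith
  have hbase := exp_one_mul_div_le_exp_sq hp hL2 hL1 hd hr_half
  have hdecay := exp_mul_div_le_sub_mul_one_sub_pow hp hpε hε1 (by linarith) hd hpr hrn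
  have hexponent : 2 * L * r + L ≤ exp (ε / 2 * L) / (2 * p) := by
    rw [le_div_iff₀ (by positivity)]
    nlinarith
  calc EX n r p ≤ (exp 1 * n / r) ^ r * exp (-((n - r : ℕ) * (1 - p) ^ r)) :=
        EX_le hp.le (by linarith) n r
    _ ≤ (exp L ^ 2) ^ r * exp (-(exp (ε / 2 * L) / (2 * p))) := by gcongr
    _ = exp (2 * L * r - exp (ε / 2 * L) / (2 * p)) := by
        rw [← pow_mul, ← exp_nat_mul, ← exp_add]; push_cast; ring_nf
    _ ≤ exp (-L) := exp_le_exp.2 (by linarith)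
    _ = (n * p)⁻¹ := by rw [exp_neg, hd]

end Estimates

section Tails

lemma gnp_domNumber_lt_le {n : ℕ} {p ε : ℝ} (hp : 0 < p) (hpε : p ≤ ε / 2) (hε1 : ε < 1)
    (hL : 2 / (1 - ε) ≤ log (n * p)) (hLd : 2 * (1 - ε) * log (n * p) ≤ n * p)
    (hexp : 2 * log (n * p) ^ 2 + log (n * p) ≤ exp (ε / 2 * log (n * p)) / 2) :
    gnp n p {f | (domNumber (graphOf f) : ℝ) < (1 - ε) * (log (n * p) / p)} ≤
      ENNReal.ofReal (n * p)⁻¹ := by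
  have hrn : ⌊(1 - ε) * (log (n * p) / p)⌋₊ ≤ n := by
    have := two_mul_floor_le hp hLd
    have : (⌊(1 - ε) * (log (n * p) / p)⌋₊ : ℝ) ≤ n := by linarith
    exact_mod_cast this
  calc gnp n p {f | (domNumber (graphOf f) : ℝ) < (1 - ε) * (log (n * p) / p)}
      ≤ gnp n p {f | domNumber (graphOf f) ≤ ⌊(1 - ε) * (log (n * p) / p)⌋₊} :=
        measure_mono fun f hf => Nat.le_floor (le_of_lt hf)
    _ ≤ ENNReal.ofReal (EX n ⌊(1 - ε) * (log (n * p) / p)⌋₊ p) :=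
        gnp_domNumber_le_le hp.le (by linarith) hrn
    _ ≤ ENNReal.ofReal (n * p)⁻¹ :=
        ENNReal.ofReal_le_ofReal (EX_floor_le_inv hp hpε hε1 hL hLd hexp)

lemma gnp_domNumber_gt_le {n : ℕ} {p ε : ℝ} (hp : 0 < p) (hp1 : p ≤ 1) (hε : 0 < ε)
    (hL : 3 / ε ≤ log (n * p)) (hLd : (1 + ε / 3) * log (n * p) ≤ n * p) :
    gnp n p {f | (1 + ε) * (log (n * p) / p) < domNumber (graphOf f)} ≤
      ENNReal.ofReal (exp (-(ε / 3 * log (n * p)))) := by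
  set L := log (n * p)
  have hεL : 1 ≤ ε / 3 * L := by rw [div_le_iff₀ hε] at hL; linarith
  have hLpos : 0 < L := by nlinarith
  have hd : n * p = exp L :=
    (exp_log (by have := (log_pos_iff (by positivity)).1 hLpos; linarith)).symm
  have ha : 1 ≤ ε / 3 * (L / p) := hεL.trans (by gcongr; exact le_div_self hLpos.le hp hp1)
  set r := ⌈(1 + ε / 3) * (L / p)⌉₊
  have hrn : r ≤ n := Nat.ceil_le.2 (by rwa [← mul_div_assoc, div_le_iff₀ hp])
  have hsub : {f : Sym2 (Fin n) → Bool | (1 + ε) * (L / p) < domNumber (graphOf f)} ⊆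
      {f | r + ε / 3 * (L / p) ≤ (domNumber (graphOf f) : ℝ)} := fun f hf => by
    have : (r : ℝ) < (1 + ε / 3) * (L / p) + 1 := Nat.ceil_lt_add_one (by positivity)
    simp only [Set.mem_ofPred_eq] at hf ⊢
    linarith
  have hpow : (1 - p) ^ r ≤ exp (-((1 + ε / 3) * L)) := by
    calc (1 - p) ^ r ≤ exp (-p) ^ r := by gcongr; exact one_sub_le_exp_neg p
      _ = exp (-(p * r)) := by rw [← exp_nat_mul]; ring_nf
      _ ≤ exp (-((1 + ε / 3) * L)) := by
          refine exp_le_exp.2 (neg_le_neg ?_)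
          calc (1 + ε / 3) * L = p * ((1 + ε / 3) * (L / p)) := by field_simp
            _ ≤ p * r := by gcongr; exact Nat.le_ceil _
  have hsplit : exp L * exp (-((1 + ε / 3) * L)) = exp (-(ε / 3 * L)) := by
    rw [← exp_add]; ring_nf
  refine (measure_mono hsub).trans <| (gnp_domNumber_ge_le hp.le hp1 hrn (by positivity)).trans
    (ENNReal.ofReal_le_ofReal ?_)
  calc n * (1 - p) ^ r / (ε / 3 * (L / p))
      ≤ n * exp (-((1 + ε / 3) * L)) / (ε / 3 * (L / p)) := by gcongr
    _ = exp (-(ε / 3 * L)) / (ε / 3 * L) := by rw [← hsplit, ← hd]; field_simp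
    _ ≤ exp (-(ε / 3 * L)) := div_le_self (exp_pos _).le hεL

lemma eventually_log_le_mul {c : ℝ} (hc : 0 < c) : ∀ᶠ x in atTop, log x ≤ c * x := by
  filter_upwards [isLittleO_log_id_atTop.bound hc, eventually_gt_atTop 0] with x hx hx0
  simpa [abs_of_pos hx0] using (le_abs_self _).trans hx

lemma eventually_two_mul_sq_add_le_exp {b : ℝ} (hb : 0 < b) :
    ∀ᶠ x in atTop, 2 * x ^ 2 + x ≤ exp (b * x) / 2 := by
  filter_upwards [(isLittleO_pow_exp_pos_mul_atTop 2 hb).bound (by norm_num : (0 : ℝ) < 1 / 6),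
    eventually_ge_atTop 1] with x hx hx1
  simp only [norm_pow, Real.norm_eq_abs, abs_of_pos (exp_pos _), abs_of_pos
    (by linarith : (0 : ℝ) < x)] at hx
  nlinarith

lemma compl_setOf_abs_sub_one_le_subset {n : ℕ} {p ε δ : ℝ} (hn : n ≠ 0) (hp : 0 < p)
    (hL : 0 < log (n * p)) (hδε : δ ≤ ε) :
    {f : Sym2 (Fin n) → Bool |
      |(domNumber (graphOf f) : ℝ) * (n * p) / (n * log (n * p)) - 1| ≤ ε}ᶜ ⊆
      {f | (1 + ε) * (log (n * p) / p) < domNumber (graphOf f)} ∪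
        {f | (domNumber (graphOf f) : ℝ) < (1 - δ) * (log (n * p) / p)} := by
  intro f hf
  have ht : 0 < log (n * p) / p := div_pos hL hp
  have hratio : (domNumber (graphOf f) : ℝ) * (n * p) / (n * log (n * p)) =
      domNumber (graphOf f) / (log (n * p) / p) := by
    field_simp [Nat.cast_ne_zero.2 hn]
  rw [Set.mem_compl_iff, Set.mem_ofPred_eq, hratio, not_le, lt_abs] at hf
  rcases hf with hf | hf
  · exact Or.inl ((lt_div_iff₀ ht).1 (by linarith))
  · exact Or.inr ((div_lt_iff₀ ht).1 (by linarith))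

variable (p : ℕ → ℝ) {ε : ℝ}

lemma tendsto_gnp_domNumber_gt (hp : ∀ n, 0 < p n ∧ p n < 1)
    (hd : Tendsto (fun n : ℕ => n * p n) atTop atTop) (hε : 0 < ε) :
    Tendsto (fun n : ℕ => gnp n (p n)
      {f | (1 + ε) * (log (n * p n) / p n) < domNumber (graphOf f)}) atTop (nhds 0) := by
  have hL := tendsto_log_atTop.comp hd
  have hlim : Tendsto (fun n : ℕ => ENNReal.ofReal (exp (-(ε / 3 * log (n * p n)))))
      atTop (nhds 0) := by
    simpa using ENNReal.tendsto_ofReal (tendsto_exp_atBot.comp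
      (tendsto_neg_atTop_atBot.comp (hL.const_mul_atTop (by positivity))))
  refine tendsto_of_tendsto_of_tendsto_of_le_of_le' tendsto_const_nhds hlim
    (.of_forall fun _ => zero_le) ?_
  filter_upwards [hL.eventually_ge_atTop (3 / ε),
    hd.eventually (eventually_log_le_mul (c := (1 + ε / 3)⁻¹) (by positivity))] with n hL hLd
  exact gnp_domNumber_gt_le (hp n).1 (hp n).2.le hε hL ((le_inv_mul_iff₀ (by positivity)).1 hLd)

lemma tendsto_gnp_domNumber_lt (hp : ∀ n, 0 < p n) (hp0 : Tendsto p atTop (nhds 0))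
    (hd : Tendsto (fun n : ℕ => n * p n) atTop atTop) (hε : 0 < ε) (hε1 : ε < 1) :
    Tendsto (fun n : ℕ => gnp n (p n)
      {f | (domNumber (graphOf f) : ℝ) < (1 - ε) * (log (n * p n) / p n)}) atTop (nhds 0) := by
  have hL := tendsto_log_atTop.comp hd
  have hlim : Tendsto (fun n : ℕ => ENNReal.ofReal (n * p n)⁻¹) atTop (nhds 0) := by
    simpa using ENNReal.tendsto_ofReal (tendsto_inv_atTop_zero.comp hd)
  refine tendsto_of_tendsto_of_tendsto_of_le_of_le' tendsto_const_nhds hlim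
    (.of_forall fun _ => zero_le) ?_
  filter_upwards [hp0.eventually (ge_mem_nhds (half_pos hε)),
    hL.eventually_ge_atTop (2 / (1 - ε)),
    hd.eventually (eventually_log_le_mul (c := (2 * (1 - ε))⁻¹) (inv_pos.2 (by linarith))),
    hL.eventually (eventually_two_mul_sq_add_le_exp (half_pos hε))] with n hpε hL hLd hexp
  exact gnp_domNumber_lt_le (hp n) hpε hε1 hL ((le_inv_mul_iff₀ (by linarith)).1 hLd) hexp

end Tails

/-- Proposition 2: if `p → 0` and `d = np → ∞`, then a.a.s.
`D(G(n,p)) = (n ln d / d)(1 + o(1))`. -/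
theorem stmt_1 (p : ℕ → ℝ) (hp : ∀ n, 0 < p n ∧ p n < 1)
    (hp0 : Tendsto p atTop (nhds 0))
    (hd : Tendsto (fun n : ℕ => n * p n) atTop atTop) :
    ∀ ε > (0 : ℝ),
      Tendsto (fun n : ℕ => gnp n (p n)
          {f | |(domNumber (graphOf f) : ℝ) * (n * p n) / (n * Real.log (n * p n)) - 1| ≤ ε})
        atTop (nhds 1) := by
  intro ε hε
  -- `{D < (1 - ε) t} ⊆ {D < (1 - δ) t}` for `δ ≤ ε`; the lower tail is estimated for `δ < 1`.
  have hδ : 0 < min ε (1 / 2) := lt_min hε (by norm_num)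
  have hfar := (tendsto_gnp_domNumber_gt p hp hd hε).add
    (tendsto_gnp_domNumber_lt p (fun n => (hp n).1) hp0 hd hδ
      (by linarith [min_le_right ε (1 / 2)]))
  rw [add_zero] at hfar
  have hcompl := tendsto_of_tendsto_of_tendsto_of_le_of_le' tendsto_const_nhds hfar
    (.of_forall fun _ => zero_le) <| by
      filter_upwards [eventually_ne_atTop 0, (tendsto_log_atTop.comp hd).eventually_gt_atTop 0]
        with n hn hL
      exact (measure_mono (compl_setOf_abs_sub_one_le_subset hn (hp n).1 hL
        (min_le_left ε (1 / 2)))).trans (measure_union_le _ _)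
  simpa [prob_compl_eq_one_sub .of_discrete,
    ENNReal.sub_sub_cancel ENNReal.one_ne_top prob_le_one] using
    ENNReal.Tendsto.sub tendsto_const_nhds hcompl (.inl ENNReal.one_ne_top)
end

section
/- Let n ≥ 1, let 0 < p < 1, and let X_r denote the number of dominating sets of size r in G ~ G(n,p), so E(X_r) = C(n,r)(1−(1−p)^r)^{n−r}. Then for every integer ℓ with 0 ≤ ℓ < n/2 one has E(X_ℓ) < E(X_{ℓ+1}); moreover, for every integer ℓ with 1 ≤ ℓ < n/2, E(X_{ℓ+1}) ≥ exp( (n−ℓ) · (1−p)^ℓ · p ) · E(X_ℓ). -/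
open MeasureTheory Filter
open scoped Classical

/-!
Write `q = 1 - p`, `a = 1 - q^ℓ` and `b = 1 - q^(ℓ+1) = a + c` with `c = q^ℓ p`, so that
`E(X_ℓ) = C(n,ℓ) a^(n-ℓ)` and `E(X_{ℓ+1}) = C(n,ℓ+1) b^(n-ℓ-1)`. Since `b ≤ 1`, the bound
`e^(-c) ≥ 1 - c` gives `a e^c ≤ b`, hence `e^((n-ℓ)c) a^(n-ℓ) ≤ b^(n-ℓ) ≤ b^(n-ℓ-1)`; and
`C(n,ℓ) ≤ C(n,ℓ+1)` for `2ℓ < n`. Strict growth follows because the exponent is positive and `E(X_{ℓ+1}) > 0`.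
-/

theorem Nat.choose_le_choose_succ_of_two_mul_lt {n r : ℕ} (h : 2 * r < n) :
    n.choose r ≤ n.choose (r + 1) := by
  refine Nat.le_of_mul_le_mul_right ?_ r.succ_pos
  rw [Nat.choose_succ_right_eq]
  exact Nat.mul_le_mul_left _ (by omega)

theorem Real.mul_exp_le_of_add_le {a b c : ℝ} (ha : 0 ≤ a) (hc : 0 ≤ c) (hb : b ≤ 1)
    (habc : a + c ≤ b) : a * Real.exp c ≤ b := by
  have hexp : b * (1 - c) ≤ b * Real.exp (-c) :=
    mul_le_mul_of_nonneg_left (by linarith [Real.add_one_le_exp (-c)]) (by linarith)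
  calc a * Real.exp c ≤ b * (1 - c) * Real.exp c := by
        gcongr
        nlinarith
    _ ≤ b * Real.exp (-c) * Real.exp c := by gcongr
    _ = b := by rw [mul_assoc, ← Real.exp_add, neg_add_cancel, Real.exp_zero, mul_one]

section EX

variable {n r ℓ : ℕ} {p : ℝ}

theorem EX_nonneg (hp0 : 0 ≤ p) (hp1 : p ≤ 1) : 0 ≤ EX n r p := by
  have : (1 - p) ^ r ≤ 1 := pow_le_one₀ (by linarith) (by linarith)
  unfold EX
  have : 0 ≤ 1 - (1 - p) ^ r := by linarith
  positivity

theorem EX_pos (hp0 : 0 < p) (hp1 : p ≤ 1) (hr : r ≠ 0) (hrn : r ≤ n) : 0 < EX n r p := by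
  have : (1 - p) ^ r < 1 := pow_lt_one₀ (by linarith) (by linarith) hr
  have : 0 < 1 - (1 - p) ^ r := by linarith
  have : 0 < n.choose r := Nat.choose_pos hrn
  unfold EX
  positivity

theorem exp_mul_EX_le_EX_succ (hp0 : 0 ≤ p) (hp1 : p ≤ 1) (h : 2 * ℓ < n) :
    Real.exp (((n : ℝ) - ℓ) * (1 - p) ^ ℓ * p) * EX n ℓ p ≤ EX n (ℓ + 1) p := by
  obtain ⟨m, rfl⟩ : ∃ m, n = ℓ + 1 + m := ⟨n - (ℓ + 1), by omega⟩
  set q := 1 - p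
  set a := 1 - q ^ ℓ
  set b := 1 - q ^ (ℓ + 1)
  set c := q ^ ℓ * p
  have hq0 : 0 ≤ q := by linarith
  have hq1 : q ≤ 1 := by linarith
  have ha : 0 ≤ a := by linarith [pow_le_one₀ hq0 hq1 (n := ℓ)]
  have hb0 : 0 ≤ b := by linarith [pow_le_one₀ hq0 hq1 (n := ℓ + 1)]
  have hb1 : b ≤ 1 := by linarith [pow_nonneg hq0 (ℓ + 1)]
  have hc : 0 ≤ c := by positivity
  have hbac : a + c = b := by simp only [a, b, c, q]; ring
  have hchoose : ((ℓ + 1 + m).choose ℓ : ℝ) ≤ (ℓ + 1 + m).choose (ℓ + 1) := by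
    exact_mod_cast Nat.choose_le_choose_succ_of_two_mul_lt h
  have hexp : Real.exp ((((ℓ + 1 + m : ℕ) : ℝ) - ℓ) * q ^ ℓ * p) = Real.exp c ^ (m + 1) := by
    rw [← Real.exp_nat_mul]
    congr 1
    push_cast
    ring
  rw [EX, EX, show ℓ + 1 + m - ℓ = m + 1 by omega, show ℓ + 1 + m - (ℓ + 1) = m by omega, hexp]
  calc Real.exp c ^ (m + 1) * (((ℓ + 1 + m).choose ℓ : ℝ) * a ^ (m + 1))
      = ((ℓ + 1 + m).choose ℓ : ℝ) * (a * Real.exp c) ^ (m + 1) := by rw [mul_pow]; ring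
    _ ≤ ((ℓ + 1 + m).choose ℓ : ℝ) * b ^ (m + 1) := by
        gcongr
        exact Real.mul_exp_le_of_add_le ha hc hb1 hbac.le
    _ ≤ ((ℓ + 1 + m).choose (ℓ + 1) : ℝ) * b ^ m :=
        mul_le_mul hchoose (pow_le_pow_of_le_one hb0 hb1 m.le_succ) (by positivity)
          (by positivity)

theorem EX_lt_EX_succ (hp0 : 0 < p) (hp1 : p < 1) (h : 2 * ℓ < n) :
    EX n ℓ p < EX n (ℓ + 1) p := by
  have hexp : 1 < Real.exp (((n : ℝ) - ℓ) * (1 - p) ^ ℓ * p) := by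
    have : (ℓ : ℝ) < n := by exact_mod_cast (by omega : ℓ < n)
    have : 0 < (1 - p) ^ ℓ := pow_pos (by linarith) ℓ
    exact Real.one_lt_exp_iff.2 (by positivity)
  have hle := exp_mul_EX_le_EX_succ hp0.le hp1.le h
  rcases (EX_nonneg hp0.le hp1.le : 0 ≤ EX n ℓ p).eq_or_lt with hzero | hpos
  · rw [← hzero]
    exact EX_pos hp0 hp1.le ℓ.succ_ne_zero (by omega)
  · exact (lt_mul_of_one_lt_left hpos hexp).trans_le hle

end EX

theorem stmt_5_general (n : ℕ) (p : ℝ) (hp0 : 0 < p) (hp1 : p < 1) :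
    (∀ ℓ : ℕ, 2 * ℓ < n → EX n ℓ p < EX n (ℓ + 1) p) ∧
    (∀ ℓ : ℕ, 1 ≤ ℓ → 2 * ℓ < n →
      EX n (ℓ + 1) p ≥ Real.exp (((n : ℝ) - ℓ) * (1 - p) ^ ℓ * p) * EX n ℓ p) :=
  ⟨fun _ h => EX_lt_EX_succ hp0 hp1 h,
    fun _ _ h => exp_mul_EX_le_EX_succ hp0.le hp1.le h⟩

/-- from Lemma 6: monotonicity of `E(X_ℓ)` for `ℓ < n/2`, and the
quantitative lower bound `E(X_{ℓ+1}) ≥ exp((n-ℓ)(1-p)^ℓ p) E(X_ℓ)` for `1 ≤ ℓ < n/2`. -/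
theorem stmt_5 (n : ℕ) (hn : 1 ≤ n) (p : ℝ) (hp0 : 0 < p) (hp1 : p < 1) :
    (∀ ℓ : ℕ, 2 * ℓ < n → EX n ℓ p < EX n (ℓ + 1) p) ∧
    (∀ ℓ : ℕ, 1 ≤ ℓ → 2 * ℓ < n →
      EX n (ℓ + 1) p ≥ Real.exp (((n : ℝ) - ℓ) * (1 - p) ^ ℓ * p) * EX n ℓ p) :=
  stmt_5_general n p hp0 hp1
end

section
/- Let p = p(n) → 0 with d = np → ∞, let r = r(n) be a sequence of positive integers with p(n)·(r(n) − log_q(d/ln²d)) → 0, and let α = α(n) be a sequence of positive integers with p(n)·α(n) → 0. Then ln( E(X_{r+α}) / E(X_r) ) / ( α · ln²d ) → 1 as n → ∞; that is, E(X_{r+α})/E(X_r) = exp( (1+o(1)) · α · ln²d ). -/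
open MeasureTheory Filter
open scoped Classical

open Real Asymptotics Topology

/-! Write `x = (1-p)^r`, `c = -ln (1-p)` (so `x = e^{-cr}`) and `L = ln d`. Taking logarithms,
`ln (E X_{r+α} / E X_r)` is the sum of `ln (C(n,r+α) / C(n,r))`,
`(n-r) ln (1 + x (1-(1-p)^α) / (1-x))` and `-α ln (1 - (1-p)^{r+α})`.
The hypothesis on `r` says `c r = ln (d / L²) + o(1)`, hence `d x ~ L²`, `x → 0` and `p r ~ L`,
so that `r = o(n)`. The middle term is then `~ n · x · α p = α · d x ~ α L²`; the binomial ratio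
lies between `1` and `(n/r)^α ≤ d^α`, contributing at most `α L = o(α L²)`, and the last term is
`α · o(1)`. -/

lemma isEquivalent_id_of_hasDerivAt {f : ℝ → ℝ} (hf : HasDerivAt f 1 0) (h0 : f 0 = 0) :
    f ~[𝓝 0] id := by
  have h := hasDerivAt_iff_isLittleO.mp hf
  simp only [h0, sub_zero, smul_eq_mul, mul_one] at h
  exact h

lemma one_sub_pow_eq_exp {p : ℝ} (hp : p < 1) (k : ℕ) :
    (1 - p) ^ k = exp (-(-log (1 - p) * k)) := by
  rw [neg_mul, neg_neg, mul_comm, ← log_pow, exp_log (pow_pos (sub_pos.2 hp) _)]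

section
variable {ι : Type*} {l : Filter ι}

lemma Filter.Tendsto.isLittleO_of_tendsto_atTop {f g : ι → ℝ} (hf : Tendsto f l (𝓝 0))
    (hg : Tendsto g l atTop) : f =o[l] g :=
  ((isLittleO_one_iff ℝ).mpr hf).trans
    ((isLittleO_one_left_iff ℝ).mpr (tendsto_norm_atTop_atTop.comp hg))

lemma isEquivalent_of_tendsto_sub {K T L : ι → ℝ} (hKT : Tendsto (K - T) l (𝓝 0))
    (hT : T ~[l] L) (hL : Tendsto L l atTop) : K ~[l] L := by
  have h : (K - T) =o[l] T := hKT.isLittleO_of_tendsto_atTop (hT.symm.tendsto_atTop hL)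
  simpa using (IsEquivalent.refl.add_isLittleO h).trans hT

lemma isEquivalent_log_one_add {u : ι → ℝ} (hu : Tendsto u l (𝓝 0)) :
    (fun i => log (1 + u i)) ~[l] u := by
  have hf : HasDerivAt (fun t => log (1 + t)) 1 0 := by
    simpa using ((hasDerivAt_id (0 : ℝ)).const_add 1).log (by norm_num)
  exact (isEquivalent_id_of_hasDerivAt hf (by simp)).comp_tendsto hu

lemma isEquivalent_one_sub_exp_neg {u : ι → ℝ} (hu : Tendsto u l (𝓝 0)) :
    (fun i => 1 - exp (-u i)) ~[l] u := by
  have hf : HasDerivAt (fun t => 1 - exp (-t)) 1 0 := by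
    simpa using ((hasDerivAt_neg (0 : ℝ)).exp).const_sub 1
  exact (isEquivalent_id_of_hasDerivAt hf (by simp)).comp_tendsto hu

lemma isEquivalent_neg_log_one_sub {u : ι → ℝ} (hu : Tendsto u l (𝓝 0)) :
    (fun i => -log (1 - u i)) ~[l] u := by
  have hf : HasDerivAt (fun t => -log (1 - t)) 1 0 := by
    simpa using (((hasDerivAt_id (0 : ℝ)).const_sub 1).log (by norm_num)).fun_neg
  exact (isEquivalent_id_of_hasDerivAt hf (by simp)).comp_tendsto hu

lemma isEquivalent_log_div_log_sq {D : ι → ℝ} (hD : Tendsto D l atTop) :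
    (fun i => log (D i / log (D i) ^ 2)) ~[l] fun i => log (D i) := by
  have hL := tendsto_log_atTop.comp hD
  have hlogL : (fun i => 2 * log (log (D i))) =o[l] fun i => log (D i) :=
    (isLittleO_log_id_atTop.comp_tendsto hL).const_mul_left 2
  refine (IsEquivalent.refl.sub_isLittleO hlogL).congr_left ?_
  filter_upwards [hD.eventually_gt_atTop 0, hL.eventually_gt_atTop 0] with i hDi hLi
  simp only [Pi.sub_apply, Function.comp_apply] at hLi ⊢
  rw [log_div hDi.ne' (by positivity), log_pow]
  push_cast
  ring

lemma isEquivalent_mul_exp_neg {D K : ι → ℝ} (hD : Tendsto D l atTop)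
    (hK : Tendsto (fun i => K i - log (D i / log (D i) ^ 2)) l (𝓝 0)) :
    (fun i => D i * exp (-K i)) ~[l] fun i => log (D i) ^ 2 := by
  have hexp : Tendsto (fun i => exp (-(K i - log (D i / log (D i) ^ 2)))) l (𝓝 1) := by
    simpa using hK.neg.rexp
  refine isEquivalent_of_tendsto_one (hexp.congr' ?_)
  filter_upwards [hD.eventually_gt_atTop 0,
    (tendsto_log_atTop.comp hD).eventually_gt_atTop 0] with i hDi hLi
  simp only [Function.comp_apply] at hLi
  rw [neg_sub, exp_sub, exp_log (by positivity), Pi.div_apply, exp_neg]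
  field_simp

lemma isEquivalent_log_one_add_mul_div {x q v : ι → ℝ} (hx : Tendsto x l (𝓝 0))
    (hq : q ~[l] v) (hv : Tendsto v l (𝓝 0)) :
    (fun i => log (1 + x i * q i / (1 - x i))) ~[l] fun i => x i * v i := by
  have h1x : (fun i => 1 - x i) ~[l] fun _ => (1 : ℝ) :=
    (isEquivalent_const_iff_tendsto one_ne_zero).mpr (by simpa using hx.const_sub 1)
  have hu : (fun i => x i * q i / (1 - x i)) ~[l] fun i => x i * v i := by
    refine ((IsEquivalent.refl (u := x)).mul hq |>.div h1x).congr_right ?_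
    filter_upwards with i using div_one _
  have hxv : Tendsto (fun i => x i * v i) l (𝓝 0) := by simpa using hx.mul hv
  exact (isEquivalent_log_one_add (hu.symm.tendsto_nhds hxv)).trans hu

lemma isEquivalent_one_sub_one_sub_pow {p : ι → ℝ} {k : ι → ℕ} (hp : ∀ i, p i < 1)
    (hp0 : Tendsto p l (𝓝 0)) (hk : Tendsto (fun i => p i * k i) l (𝓝 0)) :
    (fun i => 1 - (1 - p i) ^ k i) ~[l] fun i => p i * k i := by
  have hc : (fun i => -log (1 - p i) * k i) ~[l] fun i => p i * k i :=
    (isEquivalent_neg_log_one_sub hp0).mul IsEquivalent.refl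
  refine ((isEquivalent_one_sub_exp_neg (hc.symm.tendsto_nhds hk)).trans hc).congr_left
    (Eventually.of_forall fun i => ?_)
  simp only [one_sub_pow_eq_exp (hp i)]

lemma tendsto_one_sub_pow_nhds_zero {p : ι → ℝ} {k : ι → ℕ} (hp : ∀ i, p i < 1)
    (hk : Tendsto (fun i => -log (1 - p i) * k i) l atTop) :
    Tendsto (fun i => (1 - p i) ^ k i) l (𝓝 0) := by
  simp only [one_sub_pow_eq_exp (hp _)]
  exact tendsto_exp_atBot.comp (tendsto_neg_atTop_atBot.comp hk)

lemma tendsto_neg_log_one_sub_mul_sub {p r T : ι → ℝ} (hp : ∀ i, 0 < p i ∧ p i < 1)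
    (hp0 : Tendsto p l (𝓝 0))
    (h : Tendsto (fun i => p i * (r i - T i / log (1 / (1 - p i)))) l (𝓝 0)) :
    Tendsto (fun i => -log (1 - p i) * r i - T i) l (𝓝 0) := by
  have hcp := (isEquivalent_iff_tendsto_one (Eventually.of_forall fun i => (hp i).1.ne')).mp
    (isEquivalent_neg_log_one_sub hp0)
  have hmul := hcp.mul h
  rw [one_mul] at hmul
  refine hmul.congr fun i => ?_
  have hc : log (1 - p i) ≠ 0 := (log_neg (by linarith [hp i]) (by linarith [hp i])).ne
  have := (hp i).1
  rw [Pi.div_apply, one_div, log_inv]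
  field_simp
  ring

lemma isEquivalent_neg_log_one_sub_mul {p D : ι → ℝ} {r : ι → ℕ} (hD : Tendsto D l atTop)
    (hK : Tendsto (fun i => -log (1 - p i) * r i - log (D i / log (D i) ^ 2)) l (𝓝 0)) :
    (fun i => -log (1 - p i) * r i) ~[l] fun i => log (D i) :=
  isEquivalent_of_tendsto_sub hK (isEquivalent_log_div_log_sq hD) (tendsto_log_atTop.comp hD)

lemma isEquivalent_mul_one_sub_pow {p D : ι → ℝ} {r : ι → ℕ} (hp : ∀ i, p i < 1)
    (hD : Tendsto D l atTop)
    (hK : Tendsto (fun i => -log (1 - p i) * r i - log (D i / log (D i) ^ 2)) l (𝓝 0)) :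
    (fun i => D i * (1 - p i) ^ r i) ~[l] fun i => log (D i) ^ 2 := by
  simpa only [one_sub_pow_eq_exp (hp _)] using isEquivalent_mul_exp_neg hD hK

lemma isLittleO_neg_mul_log_one_sub_one_sub_pow {p L : ι → ℝ} {r k : ι → ℕ}
    (hp : ∀ i, 0 < p i ∧ p i < 1) (hx : Tendsto (fun i => (1 - p i) ^ r i) l (𝓝 0))
    (hL : Tendsto L l atTop) :
    (fun i => -(k i * log (1 - (1 - p i) ^ (r i + k i)))) =o[l] fun i => k i * L i ^ 2 := by
  have hy : Tendsto (fun i => (1 - p i) ^ (r i + k i)) l (𝓝 0) := by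
    refine squeeze_zero (fun i => pow_nonneg (by linarith [hp i]) _) (fun i => ?_) hx
    exact pow_le_pow_of_le_one (by linarith [hp i]) (by linarith [hp i]) (by omega)
  have hlog : Tendsto (fun i => -log (1 - (1 - p i) ^ (r i + k i))) l (𝓝 0) := by
    simpa using ((hy.const_sub 1).log (by norm_num)).neg
  have hL2 : Tendsto (fun i => L i ^ 2) l atTop := (tendsto_pow_atTop two_ne_zero).comp hL
  refine ((isBigO_refl (fun i => (k i : ℝ)) l).mul_isLittleO
    (hlog.isLittleO_of_tendsto_atTop hL2)).congr_left fun i => ?_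
  ring

end

lemma Nat.choose_add_mul_pow_le (n r a : ℕ) : n.choose (r + a) * r ^ a ≤ n.choose r * n ^ a := by
  induction a with
  | zero => simp
  | succ a ih =>
    have step : n.choose (r + a + 1) * r ≤ n.choose (r + a) * n :=
      calc n.choose (r + a + 1) * r ≤ n.choose (r + a + 1) * (r + a + 1) := by gcongr; omega
        _ = n.choose (r + a) * (n - (r + a)) := Nat.choose_succ_right_eq n (r + a)
        _ ≤ n.choose (r + a) * n := by gcongr; omega
    calc n.choose (r + (a + 1)) * r ^ (a + 1) = n.choose (r + a + 1) * r * r ^ a := by ring_nf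
      _ ≤ n.choose (r + a) * n * r ^ a := by gcongr
      _ = n.choose (r + a) * r ^ a * n := by ring
      _ ≤ n.choose r * n ^ a * n := by gcongr
      _ = n.choose r * n ^ (a + 1) := by ring

lemma Nat.choose_le_choose_add {n r a : ℕ} (h : 2 * (r + a) ≤ n) :
    n.choose r ≤ n.choose (r + a) := by
  induction a with
  | zero => rfl
  | succ a ih =>
    exact (ih (by omega)).trans (Nat.choose_le_succ_of_lt_half_left (by omega))

lemma log_choose_add_sub_log_choose_le {n r a : ℕ} (hr : 0 < r) (hn : r + a ≤ n) :
    log (n.choose (r + a)) - log (n.choose r) ≤ a * log (n / r) := by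
  have hr' : (0 : ℝ) < r := by exact_mod_cast hr
  have hn' : (0 : ℝ) < n := by exact_mod_cast (show 0 < n by omega)
  have hpos : (0 : ℝ) < n.choose r := by exact_mod_cast Nat.choose_pos (by omega)
  have hle : (n.choose (r + a) : ℝ) ≤ n.choose r * (n / r) ^ a := by
    rw [div_pow, ← mul_div_assoc, le_div_iff₀ (by positivity)]
    exact_mod_cast Nat.choose_add_mul_pow_le n r a
  have := log_le_log (by exact_mod_cast Nat.choose_pos hn) hle
  rw [log_mul hpos.ne' (by positivity), log_pow] at this
  linarith

lemma one_sub_one_sub_pow_pos {p : ℝ} (hp : 0 < p ∧ p < 1) {k : ℕ} (hk : 0 < k) :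
    0 < 1 - (1 - p) ^ k :=
  sub_pos.2 (pow_lt_one₀ (by linarith) (by linarith) hk.ne')

lemma EX_pos_s6 {n k : ℕ} {p : ℝ} (hp : 0 < p ∧ p < 1) (hk : 0 < k) (hkn : k ≤ n) :
    0 < EX n k p :=
  mul_pos (by exact_mod_cast Nat.choose_pos hkn) (pow_pos (one_sub_one_sub_pow_pos hp hk) _)

lemma log_EX {n k : ℕ} {p : ℝ} (hp : 0 < p ∧ p < 1) (hk : 0 < k) (hkn : k ≤ n) :
    log (EX n k p) = log (n.choose k) + (n - k : ℕ) * log (1 - (1 - p) ^ k) := by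
  rw [EX, log_mul (by exact_mod_cast (Nat.choose_pos hkn).ne')
    (pow_ne_zero _ (one_sub_one_sub_pow_pos hp hk).ne'), log_pow]

lemma log_EX_add_div_EX {n r a : ℕ} {p : ℝ} (hp : 0 < p ∧ p < 1) (hr : 0 < r) (hn : r + a ≤ n) :
    log (EX n (r + a) p / EX n r p) =
      (log (n.choose (r + a)) - log (n.choose r)) +
        (n - r : ℕ) * log (1 + (1 - p) ^ r * (1 - (1 - p) ^ a) / (1 - (1 - p) ^ r)) +
        -(a * log (1 - (1 - p) ^ (r + a))) := by
  have hx := one_sub_one_sub_pow_pos hp hr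
  have hy := one_sub_one_sub_pow_pos hp (k := r + a) (by omega)
  have hratio : 1 + (1 - p) ^ r * (1 - (1 - p) ^ a) / (1 - (1 - p) ^ r) =
      (1 - (1 - p) ^ (r + a)) / (1 - (1 - p) ^ r) := by
    field_simp
    ring
  have hcast : ((n - (r + a) : ℕ) : ℝ) = (n - r : ℕ) - a := by
    rw [Nat.sub_add_eq, Nat.cast_sub (by omega)]
  rw [log_div (EX_pos_s6 hp (by omega) hn).ne' (EX_pos_s6 hp hr (by omega)).ne',
    log_EX hp (by omega) hn, log_EX hp hr (by omega), hratio, log_div hy.ne' hx.ne', hcast]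
  ring

section
variable {p : ℕ → ℝ} {r α : ℕ → ℕ}

lemma tendsto_cast_div_cast {k : ℕ → ℕ} (hp : ∀ n, p n ≠ 0)
    (hk : (fun n => p n * k n) =o[atTop] fun n : ℕ => n * p n) :
    Tendsto (fun n => (k n : ℝ) / n) atTop (𝓝 0) :=
  hk.tendsto_div_nhds_zero.congr fun n => by rw [mul_comm (n : ℝ), mul_div_mul_left _ _ (hp n)]

lemma isEquivalent_cast_sub (hr : Tendsto (fun n => (r n : ℝ) / n) atTop (𝓝 0)) :
    (fun n => ((n - r n : ℕ) : ℝ)) ~[atTop] fun n => (n : ℝ) := by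
  have h1 : Tendsto (fun n => 1 - (r n : ℝ) / n) atTop (𝓝 1) := by simpa using hr.const_sub 1
  refine isEquivalent_of_tendsto_one (h1.congr' ?_)
  filter_upwards [hr.eventually (gt_mem_nhds one_pos), eventually_gt_atTop 0] with n hrn hn
  have hn' : (0 : ℝ) < n := by exact_mod_cast hn
  rw [div_lt_one hn'] at hrn
  rw [Pi.div_apply, Nat.cast_sub (by exact_mod_cast hrn.le)]
  field_simp

lemma eventually_two_mul_add_le (hr : Tendsto (fun n => (r n : ℝ) / n) atTop (𝓝 0))
    (hα : Tendsto (fun n => (α n : ℝ) / n) atTop (𝓝 0)) :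
    ∀ᶠ n in atTop, 2 * (r n + α n) ≤ n := by
  filter_upwards [(hr.add hα).eventually (gt_mem_nhds (show (0 : ℝ) + 0 < 1 / 2 by norm_num)),
    eventually_gt_atTop 0] with n h hn
  have hn' : (0 : ℝ) < n := by exact_mod_cast hn
  rw [← add_div, div_lt_iff₀ hn'] at h
  exact_mod_cast (by linarith : 2 * ((r n : ℝ) + α n) ≤ n)

lemma isLittleO_log_choose_add_sub_log_choose (hr : ∀ n, 0 < r n)
    (hle : ∀ᶠ n in atTop, 2 * (r n + α n) ≤ n) (hpr : ∀ᶠ n in atTop, 1 ≤ p n * r n)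
    (hL : Tendsto (fun n : ℕ => log (n * p n)) atTop atTop) :
    (fun n => log (n.choose (r n + α n)) - log (n.choose (r n))) =o[atTop]
      fun n => α n * log (n * p n) ^ 2 := by
  have hLL : (fun n : ℕ => log (n * p n)) =o[atTop] fun n => log (n * p n) ^ 2 := by
    simpa [Function.comp_def] using (isLittleO_pow_pow_atTop_of_lt one_lt_two).comp_tendsto hL
  refine IsBigO.trans_isLittleO ?_ ((isBigO_refl (fun n => (α n : ℝ)) atTop).mul_isLittleO hLL)
  refine IsBigO.of_bound 1 ?_
  filter_upwards [hle, hpr] with n hle hpr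
  have hr' : (0 : ℝ) < r n := by exact_mod_cast hr n
  have hchoose : log (n.choose (r n)) ≤ log (n.choose (r n + α n)) :=
    log_le_log (by exact_mod_cast Nat.choose_pos (by omega))
      (by exact_mod_cast Nat.choose_le_choose_add hle)
  have hnr : log (n / r n) ≤ log (n * p n) := by
    have hn : (0 : ℝ) < n := by exact_mod_cast (show 0 < n by have := hr n; omega)
    exact log_le_log (by positivity) (by rw [div_le_iff₀ hr']; nlinarith)
  calc ‖log (n.choose (r n + α n)) - log (n.choose (r n))‖
      = log (n.choose (r n + α n)) - log (n.choose (r n)) := abs_of_nonneg (by linarith)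
    _ ≤ α n * log (n / r n) := log_choose_add_sub_log_choose_le (hr n) (by omega)
    _ ≤ α n * log (n * p n) := by gcongr
    _ ≤ 1 * ‖(α n : ℝ) * log (n * p n)‖ := by rw [one_mul]; exact le_norm_self _

lemma isEquivalent_cast_sub_mul_log_one_add (hp : ∀ n, p n < 1) (hp0 : Tendsto p atTop (𝓝 0))
    (hα : Tendsto (fun n => p n * α n) atTop (𝓝 0))
    (hrn : Tendsto (fun n => (r n : ℝ) / n) atTop (𝓝 0))
    (hx : Tendsto (fun n => (1 - p n) ^ r n) atTop (𝓝 0))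
    (hdx : (fun n : ℕ => n * p n * (1 - p n) ^ r n) ~[atTop] fun n => log (n * p n) ^ 2) :
    (fun n => ((n - r n : ℕ) : ℝ) *
        log (1 + (1 - p n) ^ r n * (1 - (1 - p n) ^ α n) / (1 - (1 - p n) ^ r n)))
      ~[atTop] fun n => α n * log (n * p n) ^ 2 := by
  have hlog := isEquivalent_log_one_add_mul_div hx (isEquivalent_one_sub_one_sub_pow hp hp0 hα) hα
  refine ((isEquivalent_cast_sub hrn).mul hlog).trans ?_
  refine (IsEquivalent.refl.mul hdx).congr_left (Eventually.of_forall fun n => ?_)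
  simp only [Pi.mul_apply]
  ring

end

/-- Lemma 6: if `p → 0`, `d = np → ∞`,
`p (r - log_q(d/ln² d)) → 0` and `p α → 0`, then
`E(X_{r+α})/E(X_r) = exp((1+o(1)) α ln² d)`. -/
theorem stmt_6 (p : ℕ → ℝ) (hp : ∀ n, 0 < p n ∧ p n < 1)
    (hp0 : Tendsto p atTop (nhds 0))
    (hd : Tendsto (fun n : ℕ => n * p n) atTop atTop)
    (r : ℕ → ℕ) (hrpos : ∀ n, 0 < r n)
    (hr : Tendsto (fun n : ℕ => p n * ((r n : ℝ) -
        Real.log ((n * p n) / (Real.log (n * p n)) ^ 2) / Real.log (1 / (1 - p n))))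
      atTop (nhds 0))
    (α : ℕ → ℕ) (hαpos : ∀ n, 0 < α n)
    (hα : Tendsto (fun n : ℕ => p n * (α n : ℝ)) atTop (nhds 0)) :
    Tendsto (fun n : ℕ =>
        Real.log (EX n (r n + α n) (p n) / EX n (r n) (p n))
          / ((α n : ℝ) * (Real.log (n * p n)) ^ 2)) atTop (nhds 1) := by
  have hp1 : ∀ n, p n < 1 := fun n => (hp n).2
  have hL : Tendsto (fun n : ℕ => log (n * p n)) atTop atTop := tendsto_log_atTop.comp hd
  have hK := tendsto_neg_log_one_sub_mul_sub hp hp0 hr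
  have hcr := isEquivalent_neg_log_one_sub_mul (r := r) hd hK
  have hpr : (fun n => p n * r n) ~[atTop] fun n : ℕ => log (n * p n) :=
    ((isEquivalent_neg_log_one_sub hp0).symm.mul IsEquivalent.refl).trans hcr
  have hx := tendsto_one_sub_pow_nhds_zero hp1 (hcr.symm.tendsto_atTop hL)
  have hrn := tendsto_cast_div_cast (fun n => (hp n).1.ne')
    (hpr.isBigO.trans_isLittleO (isLittleO_log_id_atTop.comp_tendsto hd))
  have hαn := tendsto_cast_div_cast (fun n => (hp n).1.ne') (hα.isLittleO_of_tendsto_atTop hd)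
  have hle := eventually_two_mul_add_le hrn hαn
  have hbinom := isLittleO_log_choose_add_sub_log_choose hrpos hle
    ((hpr.symm.tendsto_atTop hL).eventually_ge_atTop 1) hL
  have hmain := isEquivalent_cast_sub_mul_log_one_add hp1 hp0 hα hrn hx
    (isEquivalent_mul_one_sub_pow hp1 hd hK)
  have htail := isLittleO_neg_mul_log_one_sub_one_sub_pow (k := α) hp hx hL
  have hsum := (hbinom.add_isEquivalent hmain).add_isLittleO htail
  refine (isEquivalent_iff_tendsto_one ?_).mp (hsum.congr_left ?_)
  · filter_upwards [hL.eventually_gt_atTop 0] with n hn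
    have := hαpos n
    positivity
  · filter_upwards [hle] with n hle
    exact (log_EX_add_div_EX (hp n) (hrpos n) (by omega)).symm
end

section
/- Let p = p(n) ∈ (0,1) and let r = r(n) be a sequence of positive integers with 2r ≤ n, (1−p)^r → 0 and r·(1−p)^r → 0 as n → ∞. Then C(n,r) · C(n−r,r) · (1 − 2(1−p)^r + (1−p)^{2r})^{n−2r} ≤ (1+o(1)) · E(X_r)², where E(X_r) = C(n,r)(1−(1−p)^r)^{n−r}; i.e., the limsup of the ratio of the left-hand side to E(X_r)² is at most 1. -/
open MeasureTheory Filter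
open scoped Classical

open Topology

/-! Write `q = (1-p)^r`. The base `1 - 2q + q²` is `(1-q)²`, so the ratio is
`C(n-r,r) / C(n,r) · (1-q)^(-2r) ≤ (1-q)^(-2r)`. Once `q ≤ 1`, Bernoulli's inequality and
`1 - q ≤ exp(-q)` squeeze `(1-q)^r` between `1 - r q` and `exp(-r q)`, both of which tend to `1`
because `r q → 0`. -/

theorem Real.tendsto_one_sub_pow_of_tendsto_mul {α : Type*} {l : Filter α} {q : α → ℝ}
    {r : α → ℕ} (hq : ∀ᶠ x in l, q x ≤ 1) (hrq : Tendsto (fun x => r x * q x) l (𝓝 0)) :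
    Tendsto (fun x => (1 - q x) ^ r x) l (𝓝 1) := by
  have hlower : Tendsto (fun x => 1 - r x * q x) l (𝓝 1) := by
    simpa using tendsto_const_nhds.sub hrq
  have hupper : Tendsto (fun x => Real.exp (-(r x * q x))) l (𝓝 1) :=
    (Real.continuous_exp.tendsto' 0 1 Real.exp_zero).comp (by simpa using hrq.neg)
  refine tendsto_of_tendsto_of_tendsto_of_le_of_le' hlower hupper ?_ ?_
  · filter_upwards [hq] with x hx
    have := one_add_mul_le_pow (a := -q x) (by linarith) (r x)
    rw [← sub_eq_add_neg] at this
    linarith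
  · filter_upwards [hq] with x hx
    calc (1 - q x) ^ r x ≤ Real.exp (-q x) ^ r x :=
          pow_le_pow_left₀ (by linarith) (Real.one_sub_le_exp_neg _) _
      _ = Real.exp (-(r x * q x)) := by rw [← Real.exp_nat_mul, mul_neg]

theorem choose_mul_choose_sub_mul_div_le (n r : ℕ) (a : ℝ) :
    (n.choose r : ℝ) * ((n - r).choose r : ℝ) * (a ^ 2) ^ (n - 2 * r)
        / ((n.choose r : ℝ) * a ^ (n - r)) ^ 2 ≤ ((a ^ r) ^ 2)⁻¹ := by
  rcases lt_or_ge n (2 * r) with hlt | hle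
  · rw [Nat.choose_eq_zero_of_lt (by omega : n - r < r)]
    simp only [Nat.cast_zero, mul_zero, zero_mul, zero_div]
    positivity
  set A : ℝ := (n.choose r : ℝ)
  set B : ℝ := ((n - r).choose r : ℝ)
  set c := (a ^ 2) ^ (n - 2 * r)
  have hden : (A * a ^ (n - r)) ^ 2 = A ^ 2 * c * (a ^ r) ^ 2 := by
    rw [show n - r = n - 2 * r + r by omega]; ring
  have hBA : B / A ≤ 1 :=
    div_le_one_of_le₀ (Nat.cast_le.mpr (Nat.choose_le_choose r (n.sub_le r))) (by positivity)
  calc A * B * c / (A * a ^ (n - r)) ^ 2 = B / A * (A * c / (A * c)) * ((a ^ r) ^ 2)⁻¹ := by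
        rw [hden]; ring
    _ ≤ 1 * 1 * ((a ^ r) ^ 2)⁻¹ := by gcongr; exact div_self_le_one _
    _ = ((a ^ r) ^ 2)⁻¹ := by ring

theorem stmt_16_general (p : ℕ → ℝ) (r : ℕ → ℕ)
    (h1 : Tendsto (fun n : ℕ => (1 - p n) ^ (r n)) atTop (nhds 0))
    (h2 : Tendsto (fun n : ℕ => (r n : ℝ) * (1 - p n) ^ (r n)) atTop (nhds 0)) :
    Filter.limsup (fun n : ℕ =>
        (n.choose (r n) : ℝ) * ((n - r n).choose (r n) : ℝ) *
            (1 - 2 * (1 - p n) ^ (r n) + (1 - p n) ^ (2 * r n)) ^ (n - 2 * r n)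
          / (EX n (r n) (p n)) ^ 2) atTop ≤ (1 : ℝ) := by
  set q := fun n => (1 - p n) ^ r n
  have hbase : ∀ n, 1 - 2 * (1 - p n) ^ r n + (1 - p n) ^ (2 * r n) = (1 - q n) ^ 2 := fun n => by
    rw [pow_mul']; ring
  simp only [EX, hbase]
  have hq : ∀ᶠ n in atTop, q n ≤ 1 := (h1.eventually_lt_const one_pos).mono fun _ => le_of_lt
  have hlim : Tendsto (fun n => (((1 - q n) ^ r n) ^ 2)⁻¹) atTop (𝓝 1) := by
    simpa using ((Real.tendsto_one_sub_pow_of_tendsto_mul hq h2).pow 2).inv₀ (by norm_num)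
  calc _ ≤ limsup (fun n => (((1 - q n) ^ r n) ^ 2)⁻¹) atTop :=
        limsup_le_limsup (.of_forall fun n => choose_mul_choose_sub_mul_div_le n (r n) (1 - q n))
          (isCoboundedUnder_le_of_le atTop fun _ => by positivity) hlim.isBoundedUnder_le
    _ = 1 := hlim.limsup_eq

/-- if `2r ≤ n`, `(1-p)^r → 0` and `r(1-p)^r → 0`, then the `s = 0`
term of the second-moment sum is at most `(1+o(1)) E(X_r)²`, i.e. the limsup of the
ratio is at most `1`. -/
theorem stmt_16 (p : ℕ → ℝ) (hp : ∀ n, 0 < p n ∧ p n < 1)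
    (r : ℕ → ℕ) (hrn : ∀ n : ℕ, 2 * r n ≤ n)
    (h1 : Tendsto (fun n : ℕ => (1 - p n) ^ (r n)) atTop (nhds 0))
    (h2 : Tendsto (fun n : ℕ => (r n : ℝ) * (1 - p n) ^ (r n)) atTop (nhds 0)) :
    Filter.limsup (fun n : ℕ =>
        (n.choose (r n) : ℝ) * ((n - r n).choose (r n) : ℝ) *
            (1 - 2 * (1 - p n) ^ (r n) + (1 - p n) ^ (2 * r n)) ^ (n - 2 * r n)
          / (EX n (r n) (p n)) ^ 2) atTop ≤ (1 : ℝ) :=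
  stmt_16_general p r h1 h2
end

section
/- Let p = p(n) → 0 with p(n)·√n / ln²n → ∞, and let r = r(n) be a sequence of positive integers with q^r · ln²d / d → 1 as n → ∞. Then C(n,r) · r · C(n−r, r−1) · ( 1 − 2(1−p)^r + (1−p)^{2r−1} )^{n−2r+1} / [ C(n,r) (1−(1−p)^r)^{n−r} ]² → 0 as n → ∞. -/
open MeasureTheory Filter
open scoped Classical

/-!
Write `x = (1 - p)^r`. The base of the large power is `(1 - x)^2 + p (1 - p)^(2r-1)`, which is
at most `(1 - x)^2 (1 + 8 p x^2)`; since `n p x^2 → 0`, raising to the power `n + 1 - 2r` costs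
only a constant factor against `E(X_r)^2 = C(n,r)^2 (1 - x)^(2(n-r))`, and the leftover factor
`(1 - x)^(-(2r-2))` is bounded because `r x → 0`. What remains is
`r C(n-r, r-1) / C(n,r) ≤ 2 r^2 / n`, and the hypotheses force `r p ≤ 2 ln n` and
`p ≥ ln^2 n / √n`, hence `r^2 / n ≤ 4 / ln^2 n → 0`.
-/

open Real

theorem Nat.mul_choose_sub_mul_le {n r : ℕ} (h : 2 * r ≤ n + 2) :
    r * (n - r).choose (r - 1) * n ≤ 2 * r ^ 2 * n.choose r := by
  rcases r with _ | k
  · simp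
  have hsub : (n - (k + 1)).choose k ≤ n.choose k := Nat.choose_le_choose k (Nat.sub_le _ _)
  calc (k + 1) * (n - (k + 1)).choose (k + 1 - 1) * n
      ≤ (k + 1) * n.choose k * (2 * (n - k)) := by
        rw [Nat.add_sub_cancel]; gcongr; omega
    _ = 2 * (k + 1) * (n.choose k * (n - k)) := by ring
    _ = 2 * (k + 1) ^ 2 * n.choose (k + 1) := by rw [← Nat.choose_succ_right_eq]; ring

lemma one_add_pow_le_exp_mul {a : ℝ} (ha : -1 ≤ a) (m : ℕ) : (1 + a) ^ m ≤ exp (m * a) := by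
  rw [Real.exp_nat_mul]
  exact pow_le_pow_left₀ (by linarith) (by linarith [add_one_le_exp a]) m

lemma one_sub_two_mul_pow_add_pow_eq (q : ℝ) {r : ℕ} (hr : 1 ≤ r) :
    1 - 2 * q ^ r + q ^ (2 * r - 1) = (1 - q ^ r) ^ 2 + (1 - q) * q ^ (2 * r - 1) := by
  obtain ⟨k, rfl⟩ := Nat.exists_eq_add_of_le' hr
  rw [show 2 * (k + 1) - 1 = 2 * k + 1 by omega]
  ring

lemma one_sub_two_mul_pow_add_pow_nonneg {q : ℝ} (hq0 : 0 ≤ q) (hq1 : q ≤ 1) {r : ℕ}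
    (hr : 1 ≤ r) : 0 ≤ 1 - 2 * q ^ r + q ^ (2 * r - 1) := by
  rw [one_sub_two_mul_pow_add_pow_eq q hr]
  have : 0 ≤ 1 - q := by linarith
  positivity

lemma one_sub_two_mul_pow_add_pow_le {p : ℝ} (hp0 : 0 ≤ p) (hp : p ≤ 1 / 2) {r : ℕ}
    (hr : 1 ≤ r) (hx : (1 - p) ^ r ≤ 1 / 2) :
    1 - 2 * (1 - p) ^ r + (1 - p) ^ (2 * r - 1)
      ≤ (1 - (1 - p) ^ r) ^ 2 * (1 + 8 * p * ((1 - p) ^ r) ^ 2) := by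
  rw [one_sub_two_mul_pow_add_pow_eq (1 - p) hr, sub_sub_cancel]
  set x := (1 - p) ^ r
  have hy : (1 - p) ^ (2 * r - 1) * (1 - p) = x ^ 2 := by
    rw [← pow_succ, ← pow_mul, show 2 * r - 1 + 1 = r * 2 by omega]
  have hy_le : (1 - p) ^ (2 * r - 1) ≤ 2 * x ^ 2 := by
    nlinarith [pow_nonneg (show 0 ≤ 1 - p by linarith) (2 * r - 1)]
  have hx_sq : 1 / 4 ≤ (1 - x) ^ 2 := by nlinarith
  calc (1 - x) ^ 2 + p * (1 - p) ^ (2 * r - 1) ≤ (1 - x) ^ 2 + p * (2 * x ^ 2) := by gcongr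
    _ ≤ (1 - x) ^ 2 * (1 + 8 * p * x ^ 2) := by nlinarith [mul_nonneg hp0 (sq_nonneg x)]

/-- The `s = 1` term of the second moment `E(X_r^2)`, divided by `E(X_r)^2`. -/
noncomputable def secondMomentRatio (n r : ℕ) (p : ℝ) : ℝ :=
  n.choose r * r * (n - r).choose (r - 1) *
    (1 - 2 * (1 - p) ^ r + (1 - p) ^ (2 * r - 1)) ^ (n + 1 - 2 * r) / EX n r p ^ 2

lemma secondMomentRatio_nonneg {n r : ℕ} {p : ℝ} (hp0 : 0 ≤ p) (hp1 : p ≤ 1)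
    (hr : 1 ≤ r) : 0 ≤ secondMomentRatio n r p := by
  have := one_sub_two_mul_pow_add_pow_nonneg (q := 1 - p) (by linarith) (by linarith) hr
  unfold secondMomentRatio
  positivity

lemma secondMomentRatio_le {n r : ℕ} {p : ℝ} (hp0 : 0 ≤ p) (hp : p ≤ 1 / 2) (hr : 1 ≤ r)
    (hrn : 2 * r ≤ n) (hrx : r * (1 - p) ^ r ≤ 1 / 4)
    (hnpx : n * p * ((1 - p) ^ r) ^ 2 ≤ 1 / 8) :
    secondMomentRatio n r p ≤ 12 * (r ^ 2 / n) := by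
  set x := (1 - p) ^ r
  set m := n + 1 - 2 * r
  have hx0 : 0 ≤ x := pow_nonneg (by linarith) r
  have hx : x ≤ 1 / 2 := by
    nlinarith [show (1 : ℝ) ≤ r by exact_mod_cast hr]
  have h1x : 0 < 1 - x := by linarith
  have hB0 := one_sub_two_mul_pow_add_pow_nonneg (q := 1 - p) (by linarith) (by linarith) hr
  have hn : (0 : ℝ) < n := by exact_mod_cast (show 0 < n by omega)
  have hC : (0 : ℝ) < n.choose r := by exact_mod_cast Nat.choose_pos (by omega)
  have hBm : (1 - 2 * x + (1 - p) ^ (2 * r - 1)) ^ m ≤ (1 - x) ^ (2 * m) * 3 := by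
    have hm : (m : ℝ) ≤ n := by exact_mod_cast (show m ≤ n by omega)
    calc (1 - 2 * x + (1 - p) ^ (2 * r - 1)) ^ m ≤ ((1 - x) ^ 2 * (1 + 8 * p * x ^ 2)) ^ m :=
          pow_le_pow_left₀ hB0 (one_sub_two_mul_pow_add_pow_le hp0 hp hr hx) m
      _ ≤ (1 - x) ^ (2 * m) * exp (m * (8 * p * x ^ 2)) := by
          rw [mul_pow, ← pow_mul]
          gcongr
          have ha : (-1 : ℝ) ≤ 8 * p * x ^ 2 := by nlinarith [mul_nonneg hp0 (sq_nonneg x)]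
          exact one_add_pow_le_exp_mul ha m
      _ ≤ (1 - x) ^ (2 * m) * 3 := by
          refine mul_le_mul_of_nonneg_left ?_ (by positivity)
          calc exp (m * (8 * p * x ^ 2)) ≤ exp 1 := exp_le_exp.mpr (by nlinarith)
            _ ≤ 3 := by linarith [exp_one_lt_d9]
  have hEX : EX n r p ^ 2 = n.choose r ^ 2 * (1 - x) ^ (2 * m) * (1 - x) ^ (2 * r - 2) := by
    rw [EX, mul_pow, ← pow_mul, mul_assoc, ← pow_add]
    congr 2
    omega
  have hbern : 1 / 2 ≤ (1 - x) ^ (2 * r - 2) := by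
    have h := one_add_mul_le_pow (show (-2 : ℝ) ≤ -x by linarith) (2 * r - 2)
    have hcast : ((2 * r - 2 : ℕ) : ℝ) ≤ 2 * r := by
      exact_mod_cast (show 2 * r - 2 ≤ 2 * r by omega)
    rw [← sub_eq_add_neg] at h
    nlinarith
  have hchoose : r * (n - r).choose (r - 1) ≤ 2 * r ^ 2 * n.choose r / (n : ℝ) := by
    rw [le_div_iff₀ hn]
    exact_mod_cast Nat.mul_choose_sub_mul_le (by omega)
  rw [secondMomentRatio, hEX, div_le_iff₀ (by positivity)]
  set B := 1 - 2 * x + (1 - p) ^ (2 * r - 1)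
  calc n.choose r * r * (n - r).choose (r - 1) * B ^ m
      = n.choose r * (r * (n - r).choose (r - 1)) * B ^ m := by ring
    _ ≤ n.choose r * (2 * r ^ 2 * n.choose r / n) * ((1 - x) ^ (2 * m) * 3) := by gcongr
    _ = 12 * (r ^ 2 / n) * (n.choose r ^ 2 * (1 - x) ^ (2 * m) * (1 / 2)) := by ring
    _ ≤ 12 * (r ^ 2 / n) * (n.choose r ^ 2 * (1 - x) ^ (2 * m) * (1 - x) ^ (2 * r - 2)) := by
        gcongr

open Filter Topology

lemma tendsto_log_sq_div_sqrt_atTop :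
    Tendsto (fun n : ℕ => log n ^ 2 / √n) atTop (𝓝 0) := by
  have h :=
    (isLittleO_log_rpow_rpow_atTop 2 (by norm_num : (0 : ℝ) < 1 / 2)).tendsto_div_nhds_zero
  refine (h.comp tendsto_natCast_atTop_atTop).congr fun n => ?_
  rw [Function.comp_apply, sqrt_eq_rpow]
  norm_cast

lemma tendsto_log_natCast_atTop : Tendsto (fun n : ℕ => log n) atTop atTop :=
  tendsto_log_atTop.comp tendsto_natCast_atTop_atTop

lemma mul_le_neg_log_of_le_one_sub_pow {p c : ℝ} {r : ℕ} (hp : p ≤ 1) (hc : 0 < c)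
    (h : c ≤ (1 - p) ^ r) : r * p ≤ -log c := by
  have hexp : (1 - p) ^ r ≤ exp (-(r * p)) := by
    rw [← mul_neg, exp_nat_mul]
    exact pow_le_pow_left₀ (by linarith) (one_sub_le_exp_neg p) r
  have := log_le_log hc (h.trans hexp)
  rw [log_exp] at this
  linarith

lemma natCast_mul_eq_sqrt_mul (n : ℕ) (a : ℝ) : n * a = √n * (a * √n) := by
  rw [mul_left_comm, mul_self_sqrt n.cast_nonneg, mul_comm]

section Asymptotics

variable {p : ℕ → ℝ} {r : ℕ → ℕ}

lemma eventually_log_sq_le_mul_sqrt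
    (hgrow : Tendsto (fun n : ℕ => p n * √n / log n ^ 2) atTop atTop) :
    ∀ᶠ n : ℕ in atTop, log n ^ 2 ≤ p n * √n := by
  filter_upwards [hgrow.eventually_ge_atTop 1, tendsto_log_natCast_atTop.eventually_ge_atTop 1]
    with n h hlog
  rwa [one_le_div (by positivity)] at h

lemma tendsto_natCast_mul_atTop
    (hgrow : Tendsto (fun n : ℕ => p n * √n / log n ^ 2) atTop atTop) :
    Tendsto (fun n : ℕ => n * p n) atTop atTop := by
  refine tendsto_atTop_mono' atTop ?_ (tendsto_sqrt_atTop.comp tendsto_natCast_atTop_atTop)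
  filter_upwards [eventually_log_sq_le_mul_sqrt hgrow,
    tendsto_log_natCast_atTop.eventually_ge_atTop 1] with n h hlog
  calc √n = √n * 1 := (mul_one _).symm
    _ ≤ √n * (p n * √n) := by gcongr; nlinarith
    _ = n * p n := (natCast_mul_eq_sqrt_mul n (p n)).symm

lemma tendsto_log_sq_div_pow_mul
    (hr : Tendsto (fun n : ℕ =>
        (1 / (1 - p n)) ^ (r n) * (Real.log (n * p n)) ^ 2 / (n * p n)) atTop (𝓝 1)) :
    Tendsto (fun n : ℕ => log (n * p n) ^ 2 / ((1 - p n) ^ r n * (n * p n))) atTop (𝓝 1) :=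
  hr.congr fun n => by rw [one_div_pow, div_mul_eq_mul_div, one_mul, div_div]

variable (hp : ∀ n, 0 < p n ∧ p n < 1)
    (hgrow : Tendsto (fun n : ℕ => p n * √n / log n ^ 2) atTop atTop)
    (hr : Tendsto (fun n : ℕ =>
        (1 / (1 - p n)) ^ (r n) * (Real.log (n * p n)) ^ 2 / (n * p n)) atTop (𝓝 1))
include hp hgrow hr

lemma eventually_pow_mul_le_two_mul_log_sq :
    ∀ᶠ n : ℕ in atTop, (1 - p n) ^ r n * (n * p n) ≤ 2 * log n ^ 2 := by
  filter_upwards [(tendsto_log_sq_div_pow_mul hr).eventually (eventually_ge_nhds one_half_lt_one),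
    (tendsto_natCast_mul_atTop hgrow).eventually_ge_atTop 1] with n h hd
  have hx : 0 < (1 - p n) ^ r n := pow_pos (by linarith [hp n]) _
  have hdn : n * p n ≤ n := mul_le_of_le_one_right n.cast_nonneg (hp n).2.le
  have hlog : log (n * p n) ^ 2 ≤ log n ^ 2 :=
    pow_le_pow_left₀ (log_nonneg hd) (log_le_log (by linarith) hdn) 2
  rw [le_div_iff₀ (mul_pos hx (by linarith))] at h
  linarith

lemma eventually_one_le_two_mul_pow_mul :
    ∀ᶠ n : ℕ in atTop, 1 ≤ 2 * ((1 - p n) ^ r n * (n * p n)) := by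
  filter_upwards [(tendsto_log_sq_div_pow_mul hr).eventually (eventually_le_nhds one_lt_two),
    (tendsto_natCast_mul_atTop hgrow).eventually_ge_atTop (exp 1)] with n h hd
  have hx : 0 < (1 - p n) ^ r n := pow_pos (by linarith [hp n]) _
  have hlog : 1 ≤ log (n * p n) := by rwa [le_log_iff_exp_le (by linarith [exp_pos 1])]
  rw [div_le_iff₀ (mul_pos hx (by linarith [exp_pos 1]))] at h
  nlinarith

lemma eventually_mul_le_two_mul_log : ∀ᶠ n : ℕ in atTop, r n * p n ≤ 2 * log n := by
  filter_upwards [eventually_one_le_two_mul_pow_mul hp hgrow hr, eventually_ge_atTop 2]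
    with n h hn
  have hn' : (2 : ℝ) ≤ n := by exact_mod_cast hn
  have hdn : n * p n ≤ n := mul_le_of_le_one_right n.cast_nonneg (hp n).2.le
  have hx : (n ^ 2 : ℝ)⁻¹ ≤ (1 - p n) ^ r n := by
    rw [inv_le_iff_one_le_mul₀ (by positivity)]
    have hx0 : 0 ≤ (1 - p n) ^ r n := pow_nonneg (by linarith [hp n]) _
    nlinarith [mul_le_mul_of_nonneg_left hdn hx0, mul_nonneg (mul_nonneg hx0 n.cast_nonneg)
      (sub_nonneg.2 hn')]
  have := mul_le_neg_log_of_le_one_sub_pow (hp n).2.le (by positivity) hx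
  rwa [log_inv, neg_neg, log_pow, Nat.cast_two] at this

lemma eventually_mul_log_le_two_mul_sqrt : ∀ᶠ n : ℕ in atTop, r n * log n ≤ 2 * √n := by
  filter_upwards [eventually_log_sq_le_mul_sqrt hgrow, eventually_mul_le_two_mul_log hp hgrow hr,
    tendsto_log_natCast_atTop.eventually_ge_atTop 1] with n hp_ge hrp hlog
  have h : (r n * log n) * log n ≤ (2 * √n) * log n := by
    nlinarith [mul_le_mul_of_nonneg_left hp_ge (Nat.cast_nonneg (r n)),
      mul_le_mul_of_nonneg_right hrp (sqrt_nonneg n)]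
  exact le_of_mul_le_mul_right h (by linarith)

lemma eventually_pow_mul_sqrt_le_two : ∀ᶠ n : ℕ in atTop, (1 - p n) ^ r n * √n ≤ 2 := by
  filter_upwards [eventually_log_sq_le_mul_sqrt hgrow,
    eventually_pow_mul_le_two_mul_log_sq hp hgrow hr,
    tendsto_log_natCast_atTop.eventually_ge_atTop 1] with n hp_ge hxd hlog
  rw [natCast_mul_eq_sqrt_mul] at hxd
  have h : ((1 - p n) ^ r n * √n) * (p n * √n) ≤ 2 * (p n * √n) := by linarith
  exact le_of_mul_le_mul_right h (by nlinarith)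

lemma tendsto_sq_div_atTop : Tendsto (fun n : ℕ => (r n : ℝ) ^ 2 / n) atTop (𝓝 0) := by
  have hlim : Tendsto (fun n : ℕ => 4 / log n ^ 2) atTop (𝓝 0) :=
    tendsto_const_nhds.div_atTop ((tendsto_pow_atTop two_ne_zero).comp tendsto_log_natCast_atTop)
  refine squeeze_zero' (Eventually.of_forall fun n => by positivity) ?_ hlim
  filter_upwards [eventually_mul_log_le_two_mul_sqrt hp hgrow hr,
    tendsto_log_natCast_atTop.eventually_ge_atTop 1, eventually_gt_atTop 0] with n h hlog hn
  rw [div_le_div_iff₀ (by positivity) (by positivity)]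
  nlinarith [mul_self_le_mul_self (by positivity) h, mul_self_sqrt n.cast_nonneg]

lemma tendsto_mul_pow : Tendsto (fun n : ℕ => r n * (1 - p n) ^ r n) atTop (𝓝 0) := by
  have hx0 (n : ℕ) : 0 ≤ (1 - p n) ^ r n := pow_nonneg (by linarith [hp n]) _
  have hlim : Tendsto (fun n : ℕ => 4 / log n) atTop (𝓝 0) :=
    tendsto_const_nhds.div_atTop tendsto_log_natCast_atTop
  refine squeeze_zero' (Eventually.of_forall fun n => mul_nonneg (Nat.cast_nonneg _) (hx0 n)) ?_
    hlim
  filter_upwards [eventually_mul_log_le_two_mul_sqrt hp hgrow hr,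
    eventually_pow_mul_sqrt_le_two hp hgrow hr,
    tendsto_log_natCast_atTop.eventually_ge_atTop 1, eventually_gt_atTop 0]
    with n hr_le hx_le hlog hn
  have hs : 0 < √n := sqrt_pos.2 (by exact_mod_cast hn)
  have h := mul_le_mul hr_le hx_le (mul_nonneg (hx0 n) hs.le) (by positivity)
  rw [le_div_iff₀ (by linarith)]
  exact le_of_mul_le_mul_right (by linarith : r n * (1 - p n) ^ r n * log n * √n ≤ 4 * √n) hs

lemma tendsto_mul_mul_pow_sq :
    Tendsto (fun n : ℕ => n * p n * ((1 - p n) ^ r n) ^ 2) atTop (𝓝 0) := by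
  have hx0 (n : ℕ) : 0 ≤ (1 - p n) ^ r n := pow_nonneg (by linarith [hp n]) _
  have hlim := tendsto_log_sq_div_sqrt_atTop.const_mul 4
  rw [mul_zero] at hlim
  refine squeeze_zero' (Eventually.of_forall fun n => ?_) ?_ hlim
  · exact mul_nonneg (mul_nonneg n.cast_nonneg (hp n).1.le) (sq_nonneg _)
  filter_upwards [eventually_pow_mul_le_two_mul_log_sq hp hgrow hr,
    eventually_pow_mul_sqrt_le_two hp hgrow hr, eventually_gt_atTop 0] with n hxd hx_le hn
  have hs : 0 < √n := sqrt_pos.2 (by exact_mod_cast hn)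
  have h := mul_le_mul hxd hx_le (mul_nonneg (hx0 n) hs.le) (by positivity)
  rw [← mul_div_assoc, le_div_iff₀ hs]
  linarith

lemma eventually_secondMomentRatio_le (hp0 : Tendsto p atTop (𝓝 0)) (hrpos : ∀ n, 0 < r n) :
    ∀ᶠ n : ℕ in atTop, secondMomentRatio n (r n) (p n) ≤ 12 * (r n ^ 2 / n) := by
  filter_upwards [hp0.eventually (eventually_le_nhds one_half_pos),
    (tendsto_sq_div_atTop hp hgrow hr).eventually
      (eventually_le_nhds (by norm_num : (0 : ℝ) < 1 / 4)),
    (tendsto_mul_pow hp hgrow hr).eventually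
      (eventually_le_nhds (by norm_num : (0 : ℝ) < 1 / 4)),
    (tendsto_mul_mul_pow_sq hp hgrow hr).eventually
      (eventually_le_nhds (by norm_num : (0 : ℝ) < 1 / 8)),
    eventually_gt_atTop 0] with n hpn hsq hrx hnpx hn
  refine secondMomentRatio_le (hp n).1.le hpn (hrpos n) ?_ hrx hnpx
  have h1 : (1 : ℝ) ≤ r n := by exact_mod_cast hrpos n
  rw [div_le_iff₀ (by exact_mod_cast hn)] at hsq
  exact_mod_cast (by nlinarith : (2 * r n : ℝ) ≤ n)

end Asymptotics

/-- for `p → 0` with `p √n / ln² n → ∞` and `r` positive integers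
with `q^r ln² d / d → 1`, the `s = 1` second-moment term divided by `E(X_r)²` tends
to `0`. -/
theorem stmt_17 (p : ℕ → ℝ) (hp : ∀ n, 0 < p n ∧ p n < 1)
    (hp0 : Tendsto p atTop (nhds 0))
    (hgrow : Tendsto (fun n : ℕ => p n * Real.sqrt n / (Real.log n) ^ 2) atTop atTop)
    (r : ℕ → ℕ) (hrpos : ∀ n, 0 < r n)
    (hr : Tendsto (fun n : ℕ =>
        (1 / (1 - p n)) ^ (r n) * (Real.log (n * p n)) ^ 2 / (n * p n)) atTop (nhds 1)) :
    Tendsto (fun n : ℕ =>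
        (n.choose (r n) : ℝ) * (r n : ℝ) * ((n - r n).choose (r n - 1) : ℝ) *
            (1 - 2 * (1 - p n) ^ (r n) + (1 - p n) ^ (2 * r n - 1)) ^ (n + 1 - 2 * r n)
          / ((n.choose (r n) : ℝ) * (1 - (1 - p n) ^ (r n)) ^ (n - r n)) ^ 2)
      atTop (nhds 0) := by
  show Tendsto (fun n => secondMomentRatio n (r n) (p n)) atTop (𝓝 0)
  have hlim : Tendsto (fun n : ℕ => 12 * ((r n : ℝ) ^ 2 / n)) atTop (𝓝 0) := by
    simpa using (tendsto_sq_div_atTop hp hgrow hr).const_mul 12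
  exact squeeze_zero'
    (Eventually.of_forall fun n => secondMomentRatio_nonneg (hp n).1.le (hp n).2.le (hrpos n))
    (eventually_secondMomentRatio_le hp hgrow hr hp0 hrpos) hlim
end
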